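/- arXiv:2201.06662 — 8 statements merged into one kernel-verified Lean document; each statement's English description precedes it below -/
import Mathlib

section
/- There exist positive constants C₁, C₂ > 0 such that for every measurable function f : X → ℤ on a probability space (X,μ), the Shannon entropy of f satisfies H(f) ≤ C₁ ∫_X log(1+|f(x)|) dμ + C₂. -/
open MeasureTheory Filter Topology
open scoped ENNReal NNReal

/-- The Shannon entropy `H(f) = -∑_i μ(f⁻¹{i}) log μ(f⁻¹{i})` of a map `f : X → I`,
with values in `[0, ∞]`. -/
noncomputable def shannonEntropy {X : Type*} [MeasurableSpace X] (μ : Measure X)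
    {I : Type*} (f : X → I) : ℝ≥0∞ :=
  ∑' i : I, ENNReal.ofReal (-((μ (f ⁻¹' {i})).toReal * Real.log (μ (f ⁻¹' {i})).toReal))

/-!
For any positive weights `q i`, the elementary inequality `-p log p ≤ -p log q + q` (from
`log x ≤ x - 1` at `x = q / p`), summed over the fibres of `f`, gives
`H(f) ≤ ∫ -log q(f) dμ + ∑ q i`. The weights `q n = (1 + |n|)⁻²` on `ℤ` are summable and
have `-log q n = 2 log (1 + |n|)`.
-/

theorem Real.neg_mul_log_le_mul_neg_log_add {p q : ℝ} (hp : 0 ≤ p) (hq : 0 < q) :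
    -(p * Real.log p) ≤ p * -Real.log q + q := by
  rcases hp.eq_or_lt with rfl | hp
  · simpa using hq.le
  have h := mul_le_mul_of_nonneg_left (Real.log_le_sub_one_of_pos (div_pos hq hp)) hp.le
  rw [Real.log_div hq.ne' hp.ne', mul_sub, mul_sub, mul_div_cancel₀ _ hp.ne'] at h
  linarith

theorem ENNReal.ofReal_neg_toReal_mul_log_le (m : ℝ≥0∞) {q : ℝ} (hq : 0 < q) :
    ENNReal.ofReal (-(m.toReal * Real.log m.toReal)) ≤
      ENNReal.ofReal (-Real.log q) * m + ENNReal.ofReal q :=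
  calc ENNReal.ofReal (-(m.toReal * Real.log m.toReal))
      ≤ ENNReal.ofReal (m.toReal * -Real.log q + q) :=
        ENNReal.ofReal_le_ofReal (Real.neg_mul_log_le_mul_neg_log_add ENNReal.toReal_nonneg hq)
    _ ≤ ENNReal.ofReal (m.toReal * -Real.log q) + ENNReal.ofReal q := ENNReal.ofReal_add_le
    _ = ENNReal.ofReal (-Real.log q) * ENNReal.ofReal m.toReal + ENNReal.ofReal q := by
        rw [ENNReal.ofReal_mul ENNReal.toReal_nonneg, mul_comm]
    _ ≤ ENNReal.ofReal (-Real.log q) * m + ENNReal.ofReal q := by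
        gcongr; exact ENNReal.ofReal_toReal_le

theorem MeasureTheory.lintegral_comp_eq_tsum_mul_measure_preimage {X ι : Type*}
    [MeasurableSpace X] [MeasurableSpace ι] [Countable ι] [MeasurableSingletonClass ι]
    (μ : Measure X) {f : X → ι} (hf : Measurable f) (g : ι → ℝ≥0∞) :
    ∫⁻ x, g (f x) ∂μ = ∑' i, g i * μ (f ⁻¹' {i}) := by
  rw [← lintegral_map (measurable_of_countable g) hf, lintegral_countable']
  simp only [Measure.map_apply hf (measurableSet_singleton _)]

theorem shannonEntropy_le_lintegral_neg_log_add_tsum {X ι : Type*}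
    [MeasurableSpace X] [MeasurableSpace ι] [Countable ι] [MeasurableSingletonClass ι]
    (μ : Measure X) {f : X → ι} (hf : Measurable f) {q : ι → ℝ} (hq : ∀ i, 0 < q i) :
    shannonEntropy μ f ≤
      ∫⁻ x, ENNReal.ofReal (-Real.log (q (f x))) ∂μ + ∑' i, ENNReal.ofReal (q i) := by
  rw [lintegral_comp_eq_tsum_mul_measure_preimage μ hf (fun i => ENNReal.ofReal (-Real.log (q i))),
    ← ENNReal.tsum_add]
  exact ENNReal.tsum_le_tsum fun i => ENNReal.ofReal_neg_toReal_mul_log_le _ (hq i)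

theorem summable_inv_one_add_abs_sq : Summable fun n : ℤ => ((1 + |(n : ℝ)|) ^ 2)⁻¹ := by
  refine .of_norm_bounded_eventually (Real.summable_one_div_int_pow.mpr one_lt_two) ?_
  filter_upwards [Set.Finite.compl_mem_cofinite (Set.finite_singleton (0 : ℤ))] with n hn
  have hn : (n : ℝ) ≠ 0 := Int.cast_ne_zero.mpr hn
  rw [Real.norm_of_nonneg (by positivity), one_div, ← sq_abs (n : ℝ)]
  gcongr
  linarith

/-- There are positive constants `C₁, C₂` such that for any measurable `f : X → ℤ` on a
probability space, `H(f) ≤ C₁ ∫ log(1 + |f|) dμ + C₂`. -/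
theorem shannonEntropy_le_log_integral :
    ∃ C₁ C₂ : ℝ, 0 < C₁ ∧ 0 < C₂ ∧
      ∀ (X : Type) [MeasurableSpace X] (μ : Measure X), IsProbabilityMeasure μ →
        ∀ f : X → ℤ, Measurable f →
          shannonEntropy μ f ≤
            ENNReal.ofReal C₁ * ∫⁻ x, ENNReal.ofReal (Real.log (1 + |(f x : ℝ)|)) ∂μ +
              ENNReal.ofReal C₂ := by
  set w : ℤ → ℝ := fun n => ((1 + |(n : ℝ)|) ^ 2)⁻¹
  have hw_pos : ∀ n, 0 < w n := fun n => by positivity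
  refine ⟨2, ∑' n, w n, two_pos,
    summable_inv_one_add_abs_sq.tsum_pos (fun n => (hw_pos n).le) 0 (hw_pos 0), ?_⟩
  intro X _ μ _ f hf
  have hneg_log_w : ∀ n, -Real.log (w n) = 2 * Real.log (1 + |(n : ℝ)|) := fun n => by
    simp [w, Real.log_inv, Real.log_pow]
  calc shannonEntropy μ f
      ≤ ∫⁻ x, ENNReal.ofReal (-Real.log (w (f x))) ∂μ + ∑' n, ENNReal.ofReal (w n) :=
        shannonEntropy_le_lintegral_neg_log_add_tsum μ hf hw_pos
    _ = _ := by
        simp only [hneg_log_w, ENNReal.ofReal_mul zero_le_two]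
        rw [lintegral_const_mul' _ _ ENNReal.ofReal_ne_top,
          ENNReal.ofReal_tsum_of_nonneg (fun n => (hw_pos n).le) summable_inv_one_add_abs_sq]
end

section
/- Let T ∈ Aut(X,μ) be an aperiodic transformation with infinite dynamical entropy (i.e., every T-dynamically generating function into a countable set has infinite Shannon entropy), and let U ∈ [T] be a transformation whose T-cocycle c_U : X → ℤ has finite Shannon entropy. Then U has infinite dynamical entropy: every U-dynamically generating function into a countable set has infinite Shannon entropy. -/
open MeasureTheory Filter Topology
open scoped ENNReal NNReal

/-- A transformation is aperiodic if almost every orbit is infinite. -/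
def Aperiodic {X : Type*} [MeasurableSpace X] (μ : Measure X) (T : X ≃ᵐ X) : Prop :=
  ∀ᵐ x ∂μ, ∀ n : ℤ, n ≠ 0 → (T.toEquiv ^ n) x ≠ x

/-- A map `f : X → I` is `S`-dynamically generating if on a full measure set, distinct
points are separated by the maps `x ↦ f(Sⁿ x)`, `n ∈ ℤ`. -/
def DynGenerating {X : Type*} [MeasurableSpace X] (μ : Measure X) (S : X ≃ᵐ X)
    {I : Type*} (f : X → I) : Prop :=
  ∃ X₀ : Set X, MeasurableSet X₀ ∧ μ X₀ᶜ = 0 ∧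
    ∀ x ∈ X₀, ∀ y ∈ X₀, x ≠ y → ∃ n : ℤ, f ((S.toEquiv ^ n) x) ≠ f ((S.toEquiv ^ n) y)

/-!
If the `T`-itineraries of `x` and `y` under `x ↦ (f x, c x)` coincide, then the cocycle identity
moves `x` and `y` along their `T`-orbits by the same amounts: `Uᵏ x = Tᵃ x` and `Uᵏ y = Tᵃ y` for a
common `a`. Hence the `U`-itineraries under `f` coincide too, so `(f, c)` is `T`-dynamically
generating as soon as `f` is `U`-dynamically generating. The entropy of `(f, c)` is then infinite,
and the crude bound `H(f, c) ≤ 1 + H(f) + H(c)` together with `H(c) < ∞` gives `H(f) = ∞`.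
-/

section Cocycle

variable {X : Type*} {T U : Equiv.Perm X} {c : X → ℤ} {S : Set X}

theorem exists_zpow_apply_eq_zpow_apply_of_cocycle (hS : ∀ z ∈ S, U z = (T ^ c z) z) {x y : X}
    (hTx : ∀ a : ℤ, (T ^ a) x ∈ S) (hTy : ∀ a : ℤ, (T ^ a) y ∈ S)
    (hUx : ∀ k : ℤ, (U ^ k) x ∈ S) (hc : ∀ a : ℤ, c ((T ^ a) x) = c ((T ^ a) y)) (k : ℤ) :
    ∃ a : ℤ, (U ^ k) x = (T ^ a) x ∧ (U ^ k) y = (T ^ a) y := by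
  induction k using Int.induction_on with
  | zero => exact ⟨0, rfl, rfl⟩
  | succ k ih =>
    obtain ⟨a, hx, hy⟩ := ih
    refine ⟨c ((T ^ a) x) + a, ?_, ?_⟩
    · rw [add_comm (k : ℤ), zpow_one_add, Equiv.Perm.mul_apply, hx, hS _ (hTx a), zpow_add,
        Equiv.Perm.mul_apply]
    · rw [add_comm (k : ℤ), zpow_one_add, Equiv.Perm.mul_apply, hy, hS _ (hTy a), ← hc, zpow_add,
        Equiv.Perm.mul_apply]
  | pred k ih =>
    obtain ⟨a, hx, hy⟩ := ih
    -- The cocycle at `w = U⁻¹ (Tᵃ x)` puts `w` at `T^(a - c w) x`; the same exponent serves `y`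
    -- because `c` agrees at `T^(a - c w) x` and `T^(a - c w) y`.
    set w := (U ^ (-(k : ℤ) - 1)) x
    have hUw : U w = (T ^ a) x := by
      rw [← hx, ← Equiv.Perm.mul_apply, ← zpow_one_add, add_sub_cancel]
    have hw : w = (T ^ (a - c w)) x := by
      apply (T ^ c w).injective
      rw [← hS w (hUx _), hUw, ← Equiv.Perm.mul_apply, ← zpow_add, add_sub_cancel]
    refine ⟨a - c w, hw, U.injective ?_⟩
    rw [← Equiv.Perm.mul_apply, ← zpow_one_add, add_sub_cancel, hy, hS _ (hTy _), ← hc, ← hw,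
      ← Equiv.Perm.mul_apply, ← zpow_add, add_sub_cancel]

end Cocycle

section Generating

variable {X : Type*} [MeasurableSpace X] {μ : Measure X}

theorem MeasureTheory.MeasurePreserving.zpow_toEquiv {T : X ≃ᵐ X}
    (hT : MeasurePreserving T μ μ) (n : ℤ) : MeasurePreserving ⇑(T.toEquiv ^ n) μ μ := by
  obtain ⟨k, rfl | rfl⟩ := n.eq_nat_or_neg
  · rw [zpow_natCast, ← Equiv.Perm.iterate_eq_pow]
    exact hT.iterate k
  · rw [zpow_neg, zpow_natCast, ← inv_pow, ← Equiv.Perm.iterate_eq_pow]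
    exact (hT.symm T).iterate k

theorem DynGenerating.prodMk_cocycle {T U : X ≃ᵐ X} (hT : MeasurePreserving T μ μ)
    (hU : MeasurePreserving U μ μ) {c : X → ℤ} (hcoc : ∀ᵐ x ∂μ, U x = (T.toEquiv ^ c x) x)
    {I : Type*} {f : X → I} (hf : DynGenerating μ U f) :
    DynGenerating μ T (fun x => (f x, c x)) := by
  obtain ⟨A, -, hA, hsep⟩ := hf
  set S := {z | U z = (T.toEquiv ^ c z) z}
  have hgood : ∀ᵐ x ∂μ, x ∈ A ∧ (∀ a : ℤ, (T.toEquiv ^ a) x ∈ S) ∧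
      ∀ k : ℤ, (U.toEquiv ^ k) x ∈ S :=
    Eventually.and (mem_ae_iff.2 hA) <|
      (ae_all_iff.2 fun a => (hT.zpow_toEquiv a).quasiMeasurePreserving.ae hcoc).and
        (ae_all_iff.2 fun k => (hU.zpow_toEquiv k).quasiMeasurePreserving.ae hcoc)
  obtain ⟨X₀, hX₀, hX₀m, hX₀good⟩ := hgood.exists_measurable_mem
  refine ⟨X₀, hX₀m, mem_ae_iff.1 hX₀, fun x hx y hy hxy => ?_⟩
  obtain ⟨hxA, hTx, hUx⟩ := hX₀good x hx
  obtain ⟨hyA, hTy, -⟩ := hX₀good y hy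
  by_contra! hsame
  simp only [Prod.ext_iff] at hsame
  obtain ⟨k, hk⟩ := hsep x hxA y hyA hxy
  obtain ⟨a, hxa, hya⟩ := exists_zpow_apply_eq_zpow_apply_of_cocycle (S := S) (fun z hz => hz)
    hTx hTy hUx (fun a => (hsame a).2) k
  exact hk (by rw [hxa, hya, (hsame a).1])

end Generating

section Entropy

/-- From `log t ≤ t - 1` at `t = a * b / m`. -/
theorem Real.neg_mul_log_le_mul_sub_mul_log_sub_mul_log {m a b : ℝ} (hm : 0 ≤ m) (ha : m ≤ a)
    (hb : m ≤ b) : -(m * Real.log m) ≤ a * b - m * Real.log a - m * Real.log b := by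
  rcases hm.eq_or_lt with rfl | hm
  · simpa using mul_nonneg (hm.trans ha) (hm.trans hb)
  have hab : 0 < a * b := mul_pos (hm.trans_le ha) (hm.trans_le hb)
  have key := mul_le_mul_of_nonneg_left (Real.log_le_sub_one_of_pos (div_pos hab hm)) hm.le
  rw [Real.log_div hab.ne' hm.ne', Real.log_mul (hm.trans_le ha).ne' (hm.trans_le hb).ne',
    mul_sub_one, mul_div_cancel₀ _ hm.ne'] at key
  nlinarith

theorem ENNReal.mul_ofReal_neg_log_toReal {t : ℝ≥0∞} (ht : t ≠ ⊤) :
    t * ENNReal.ofReal (-Real.log t.toReal) = ENNReal.ofReal (-(t.toReal * Real.log t.toReal)) := by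
  rw [← mul_neg, ENNReal.ofReal_mul ENNReal.toReal_nonneg, ENNReal.ofReal_toReal ht]

theorem ENNReal.ofReal_neg_mul_log_le {m a b : ℝ≥0∞} (ha : m ≤ a) (hb : m ≤ b) (ha' : a ≠ ⊤)
    (hb' : b ≠ ⊤) :
    ENNReal.ofReal (-(m.toReal * Real.log m.toReal)) ≤
      a * b + m * ENNReal.ofReal (-Real.log a.toReal) + m * ENNReal.ofReal (-Real.log b.toReal) := by
  have hm : m ≠ ⊤ := ne_top_of_le_ne_top ha' ha
  calc ENNReal.ofReal (-(m.toReal * Real.log m.toReal))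
      ≤ ENNReal.ofReal (a.toReal * b.toReal + m.toReal * -Real.log a.toReal +
          m.toReal * -Real.log b.toReal) := by
        refine ENNReal.ofReal_le_ofReal ?_
        linarith [Real.neg_mul_log_le_mul_sub_mul_log_sub_mul_log ENNReal.toReal_nonneg
          (ENNReal.toReal_mono ha' ha) (ENNReal.toReal_mono hb' hb)]
    _ ≤ ENNReal.ofReal (a.toReal * b.toReal) + ENNReal.ofReal (m.toReal * -Real.log a.toReal) +
          ENNReal.ofReal (m.toReal * -Real.log b.toReal) := by
      refine ENNReal.ofReal_add_le.trans ?_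
      gcongr
      exact ENNReal.ofReal_add_le
    _ = _ := by
      rw [ENNReal.ofReal_mul ENNReal.toReal_nonneg, ENNReal.ofReal_mul ENNReal.toReal_nonneg,
        ENNReal.ofReal_mul ENNReal.toReal_nonneg, ENNReal.ofReal_toReal ha',
        ENNReal.ofReal_toReal hb', ENNReal.ofReal_toReal hm]

variable {X : Type*} [MeasurableSpace X] (μ : Measure X) {I J : Type*}
  [MeasurableSpace I] [MeasurableSingletonClass I] [Countable I]
  [MeasurableSpace J] [MeasurableSingletonClass J] [Countable J]

theorem tsum_measure_preimage_singleton_eq_measure_univ {f : X → I} (hf : Measurable f) :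
    ∑' i, μ (f ⁻¹' {i}) = μ Set.univ := by
  rw [← measure_iUnion (pairwise_disjoint_fiber f) fun i => hf (measurableSet_singleton i),
    ← Set.preimage_iUnion, Set.iUnion_of_singleton, Set.preimage_univ]

theorem shannonEntropy_prodMk_le [IsProbabilityMeasure μ] {f : X → I} {g : X → J}
    (hf : Measurable f) (hg : Measurable g) :
    shannonEntropy μ (fun x => (f x, g x)) ≤ 1 + shannonEntropy μ f + shannonEntropy μ g := by
  have hrow (i : I) : ∑' j, μ (f ⁻¹' {i} ∩ g ⁻¹' {j}) = μ (f ⁻¹' {i}) := by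
    simpa [Measure.restrict_apply (hg (measurableSet_singleton _)), Set.inter_comm] using
      tsum_measure_preimage_singleton_eq_measure_univ (μ.restrict (f ⁻¹' {i})) hg
  have hcol (j : J) : ∑' i, μ (f ⁻¹' {i} ∩ g ⁻¹' {j}) = μ (g ⁻¹' {j}) := by
    simpa [Measure.restrict_apply (hf (measurableSet_singleton _))] using
      tsum_measure_preimage_singleton_eq_measure_univ (μ.restrict (g ⁻¹' {j})) hf
  calc shannonEntropy μ (fun x => (f x, g x))
      ≤ ∑' p : I × J, (μ (f ⁻¹' {p.1}) * μ (g ⁻¹' {p.2}) +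
          μ (f ⁻¹' {p.1} ∩ g ⁻¹' {p.2}) * ENNReal.ofReal (-Real.log (μ (f ⁻¹' {p.1})).toReal) +
          μ (f ⁻¹' {p.1} ∩ g ⁻¹' {p.2}) * ENNReal.ofReal (-Real.log (μ (g ⁻¹' {p.2})).toReal)) :=
        ENNReal.tsum_le_tsum fun ⟨i, j⟩ => by
          rw [← Set.singleton_prod_singleton, Set.mk_preimage_prod]
          exact ENNReal.ofReal_neg_mul_log_le (measure_mono Set.inter_subset_left)
            (measure_mono Set.inter_subset_right) (measure_ne_top _ _) (measure_ne_top _ _)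
    _ = 1 + shannonEntropy μ f + shannonEntropy μ g := by
      rw [ENNReal.tsum_add, ENNReal.tsum_add, ENNReal.tsum_prod', ENNReal.tsum_prod',
        ENNReal.tsum_prod']
      dsimp only
      rw [ENNReal.tsum_comm (f := fun i j =>
        μ (f ⁻¹' {i} ∩ g ⁻¹' {j}) * ENNReal.ofReal (-Real.log (μ (g ⁻¹' {j})).toReal))]
      simp_rw [ENNReal.tsum_mul_left, ENNReal.tsum_mul_right, hrow, hcol,
        tsum_measure_preimage_singleton_eq_measure_univ μ hf,
        tsum_measure_preimage_singleton_eq_measure_univ μ hg, measure_univ, mul_one,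
        ENNReal.mul_ofReal_neg_log_toReal (measure_ne_top _ _)]
      rfl

end Entropy

theorem infinite_dynamical_entropy_of_cocycle_finite_entropy_general {X : Type*} [MeasurableSpace X]
    (μ : Measure X) [IsProbabilityMeasure μ]
    (T : X ≃ᵐ X) (hT : MeasurePreserving (⇑T) μ μ)
    (hTent : ∀ (I : Type) [MeasurableSpace I] [MeasurableSingletonClass I] [Countable I],
      ∀ f : X → I, Measurable f → DynGenerating μ T f → shannonEntropy μ f = ⊤)
    (U : X ≃ᵐ X) (hU : MeasurePreserving (⇑U) μ μ)
    (c : X → ℤ) (hc : Measurable c) (hcoc : ∀ᵐ x ∂μ, U x = (T.toEquiv ^ c x) x)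
    (hcent : shannonEntropy μ c < ⊤) :
    ∀ (I : Type) [MeasurableSpace I] [MeasurableSingletonClass I] [Countable I],
      ∀ f : X → I, Measurable f → DynGenerating μ U f → shannonEntropy μ f = ⊤ := by
  intro I _ _ _ f hf hgen
  have hpair : shannonEntropy μ (fun x => (f x, c x)) = ⊤ :=
    hTent (I × ℤ) _ (hf.prodMk hc) (hgen.prodMk_cocycle hT hU hcoc)
  have hsum : 1 + shannonEntropy μ f + shannonEntropy μ c = ⊤ :=
    top_le_iff.1 (hpair ▸ shannonEntropy_prodMk_le μ hf hc)
  simpa [ENNReal.add_eq_top, hcent.ne] using hsum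

/-- If `T` is aperiodic with infinite dynamical entropy and `U ∈ [T]` has a `T`-cocycle
of finite Shannon entropy, then `U` has infinite dynamical entropy. -/
theorem infinite_dynamical_entropy_of_cocycle_finite_entropy {X : Type*} [MeasurableSpace X]
    [StandardBorelSpace X] (μ : Measure X) [IsProbabilityMeasure μ] [NullSingletonClass μ]
    (T : X ≃ᵐ X) (hT : MeasurePreserving (⇑T) μ μ) (hap : Aperiodic μ T)
    (hTent : ∀ (I : Type) [MeasurableSpace I] [MeasurableSingletonClass I] [Countable I],
      ∀ f : X → I, Measurable f → DynGenerating μ T f → shannonEntropy μ f = ⊤)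
    (U : X ≃ᵐ X) (hU : MeasurePreserving (⇑U) μ μ)
    (c : X → ℤ) (hc : Measurable c) (hcoc : ∀ᵐ x ∂μ, U x = (T.toEquiv ^ c x) x)
    (hcent : shannonEntropy μ c < ⊤) :
    ∀ (I : Type) [MeasurableSpace I] [MeasurableSingletonClass I] [Countable I],
      ∀ f : X → I, Measurable f → DynGenerating μ U f → shannonEntropy μ f = ⊤ :=
  infinite_dynamical_entropy_of_cocycle_finite_entropy_general μ T hT hTent U hU c hc hcoc hcent
end

section
/- Let φ : ℝ₊ → ℝ₊ be a sublinear metric-compatible function and let T ∈ Aut(X,μ) be aperiodic. Then for every U ∈ [T]_φ, the sequence d_{φ,T}(Uⁿ, id)/n = (1/n) ∫_X φ(|c_{Uⁿ}(x)|) dμ converges to 0 as n → ∞, where c_{Uⁿ} is the T-cocycle of Uⁿ. -/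
open MeasureTheory Filter Topology
open scoped ENNReal NNReal

/-- A function `φ : ℝ₊ → ℝ₊` is metric-compatible if it is subadditive, non-decreasing,
vanishes exactly at `0`. -/
def MetricCompatible (φ : ℝ≥0 → ℝ≥0) : Prop :=
  (∀ s t, φ (s + t) ≤ φ s + φ t) ∧ Monotone φ ∧ φ 0 = 0 ∧ ∀ t, 0 < t → 0 < φ t

/-! Aperiodicity of `T` makes the cocycle of `Uⁿ` the Birkhoff sum `∑_{k<n} c₁ ∘ Uᵏ`. Cutting each
`|c₁|` at a level `M` and using that `φ` is monotone and subadditive gives, since `U` preserves `μ`,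
`∫ φ(|cₙ|) ≤ φ(nM) + n ∫ φ(|c₁|) 1_{|c₁| > M}`. After dividing by `n`, the first term tends to `0`
by sublinearity of `φ`, and the second is small for large `M` by dominated convergence. -/

def phiTail (φ : ℝ≥0 → ℝ≥0) (M : ℕ) (z : ℤ) : ℝ≥0 :=
  if M < z.natAbs then φ z.natAbs else 0

section PhiTail

variable {φ : ℝ≥0 → ℝ≥0}

theorem phi_natAbs_sum_le (hadd : ∀ s t, φ (s + t) ≤ φ s + φ t) (hmono : Monotone φ)
    (h0 : φ 0 = 0) {ι : Type*} (s : Finset ι) (a : ι → ℤ) (M : ℕ) :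
    φ (∑ i ∈ s, a i).natAbs ≤ φ (s.card * M) + ∑ i ∈ s, phiTail φ M (a i) := by
  set t : ι → ℕ := fun i => if M < (a i).natAbs then (a i).natAbs else 0
  have habs : (∑ i ∈ s, a i).natAbs ≤ s.card * M + ∑ i ∈ s, t i :=
    calc (∑ i ∈ s, a i).natAbs ≤ ∑ i ∈ s, (a i).natAbs := Int.natAbs_sum_le s a
      _ ≤ ∑ i ∈ s, (M + t i) := Finset.sum_le_sum fun i _ => by simp only [t]; split <;> omega
      _ = s.card * M + ∑ i ∈ s, t i := by
        rw [Finset.sum_add_distrib, Finset.sum_const, smul_eq_mul]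
  have htail : ∀ i, φ (t i) = phiTail φ M (a i) := fun i => by
    simp only [t, phiTail]; split <;> simp [h0]
  calc φ (∑ i ∈ s, a i).natAbs ≤ φ (s.card * M + ∑ i ∈ s, (t i : ℝ≥0)) :=
        hmono (by exact_mod_cast habs)
    _ ≤ φ (s.card * M) + φ (∑ i ∈ s, (t i : ℝ≥0)) := hadd _ _
    _ ≤ φ (s.card * M) + ∑ i ∈ s, φ (t i) :=
        add_le_add_right (Finset.le_sum_of_subadditive φ h0.le hadd s _) _
    _ = φ (s.card * M) + ∑ i ∈ s, phiTail φ M (a i) := by simp only [htail]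

variable {X : Type*} [MeasurableSpace X] {μ : Measure X} {f : X → ℤ}

theorem measurable_phiTail_comp (hf : Measurable f) (M : ℕ) :
    Measurable fun x => (phiTail φ M (f x) : ℝ≥0∞) :=
  (measurable_of_countable fun z => (phiTail φ M z : ℝ≥0∞)).comp hf

theorem tendsto_lintegral_phiTail (hf : Measurable f)
    (hint : ∫⁻ x, (φ (f x).natAbs : ℝ≥0∞) ∂μ ≠ ⊤) :
    Tendsto (fun M : ℕ => ∫⁻ x, (phiTail φ M (f x) : ℝ≥0∞) ∂μ) atTop (𝓝 0) := by
  have hdom : ∀ M : ℕ, ∀ x, (phiTail φ M (f x) : ℝ≥0∞) ≤ φ (f x).natAbs := fun M x => by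
    unfold phiTail; split <;> simp
  have hlim : ∀ x, Tendsto (fun M : ℕ => (phiTail φ M (f x) : ℝ≥0∞)) atTop (𝓝 0) := fun x =>
    tendsto_const_nhds.congr' <| (eventually_ge_atTop (f x).natAbs).mono fun M hM => by
      simp [phiTail, hM.not_gt]
  simpa using tendsto_lintegral_of_dominated_convergence _ (measurable_phiTail_comp hf)
    (fun M => .of_forall (hdom M)) hint (.of_forall hlim)

theorem lintegral_phi_natAbs_birkhoffSum_le [IsProbabilityMeasure μ]
    (hadd : ∀ s t, φ (s + t) ≤ φ s + φ t) (hmono : Monotone φ) (h0 : φ 0 = 0)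
    {S : X → X} (hS : MeasurePreserving S μ μ) (hf : Measurable f) (M n : ℕ) :
    ∫⁻ x, (φ (birkhoffSum S f n x).natAbs : ℝ≥0∞) ∂μ
      ≤ φ (n * M) + n * ∫⁻ x, (phiTail φ M (f x) : ℝ≥0∞) ∂μ := by
  have hmeas : ∀ k, Measurable fun x => (phiTail φ M (f (S^[k] x)) : ℝ≥0∞) := fun k =>
    (measurable_phiTail_comp hf M).comp (hS.iterate k).measurable
  calc ∫⁻ x, (φ (birkhoffSum S f n x).natAbs : ℝ≥0∞) ∂μ
      ≤ ∫⁻ x, ((φ (n * M) : ℝ≥0∞) + ∑ k ∈ Finset.range n, (phiTail φ M (f (S^[k] x)) : ℝ≥0∞)) ∂μ :=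
        lintegral_mono fun x => by
          have := phi_natAbs_sum_le hadd hmono h0 (Finset.range n) (fun k => f (S^[k] x)) M
          rw [Finset.card_range] at this
          simp only [birkhoffSum]
          exact_mod_cast this
    _ = φ (n * M) + ∑ k ∈ Finset.range n, ∫⁻ x, (phiTail φ M (f (S^[k] x)) : ℝ≥0∞) ∂μ := by
        rw [lintegral_add_left measurable_const, lintegral_const, measure_univ, mul_one,
          lintegral_finsetSum _ fun k _ => hmeas k]
    _ = φ (n * M) + n * ∫⁻ x, (phiTail φ M (f x) : ℝ≥0∞) ∂μ := by
        rw [Finset.sum_congr rfl fun k _ =>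
          (hS.iterate k).lintegral_comp (measurable_phiTail_comp hf M), Finset.sum_const,
          Finset.card_range, nsmul_eq_mul]

theorem tendsto_phi_mul_div_atTop (hsub : Tendsto (fun t => φ t / t) atTop (𝓝 0)) (M : ℕ) :
    Tendsto (fun n : ℕ => (φ (n * M) : ℝ≥0∞) / n) atTop (𝓝 0) := by
  suffices h : Tendsto (fun n : ℕ => φ (n * M) / n) atTop (𝓝 0) by
    refine (ENNReal.tendsto_coe.2 h).congr' ((eventually_ne_atTop 0).mono fun n hn => ?_)
    rw [ENNReal.coe_div (by exact_mod_cast hn), ENNReal.coe_natCast]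
  rcases M.eq_zero_or_pos with rfl | hM
  · simpa using tendsto_const_div_atTop_nhds_zero_nat (φ 0)
  · have hM' : (M : ℝ≥0) ≠ 0 := by exact_mod_cast hM.ne'
    have hnM : Tendsto (fun n : ℕ => (n : ℝ≥0) * M) atTop atTop :=
      tendsto_natCast_atTop_atTop.atTop_mul_const (by positivity)
    simpa [div_mul_eq_mul_div, mul_div_mul_right _ _ hM'] using (hsub.comp hnM).mul_const (M : ℝ≥0)

end PhiTail

theorem ENNReal.tendsto_zero_of_le_add {α : Type*} {l : Filter α} {a : α → ℝ≥0∞}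
    {b : ℕ → α → ℝ≥0∞} {t : ℕ → ℝ≥0∞} (hab : ∀ M, ∀ᶠ n in l, a n ≤ b M n + t M)
    (hb : ∀ M, Tendsto (b M) l (𝓝 0)) (ht : Tendsto t atTop (𝓝 0)) :
    Tendsto a l (𝓝 0) := by
  refine ENNReal.tendsto_nhds_zero.2 fun ε hε => ?_
  have hε2 : 0 < ε / 2 := ENNReal.half_pos hε.ne'
  obtain ⟨M, hM⟩ := (ENNReal.tendsto_nhds_zero.1 ht _ hε2).exists
  filter_upwards [hab M, ENNReal.tendsto_nhds_zero.1 (hb M) _ hε2] with n han hbn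
  calc a n ≤ b M n + t M := han
    _ ≤ ε / 2 + ε / 2 := add_le_add hbn hM
    _ = ε := ENNReal.add_halves ε

namespace Aperiodic

variable {X : Type*} [MeasurableSpace X] {μ : Measure X} {T : X ≃ᵐ X}

theorem ae_injective_zpow (hap : Aperiodic μ T) :
    ∀ᵐ x ∂μ, Function.Injective fun n : ℤ => (T.toEquiv ^ n) x := by
  filter_upwards [hap] with x hx a b hab
  by_contra hne
  refine hx (a - b) (sub_ne_zero_of_ne hne) ?_
  rw [sub_eq_neg_add, zpow_add, zpow_neg, Equiv.Perm.mul_apply]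
  exact Equiv.Perm.inv_eq_iff_eq.2 hab

theorem ae_eq_birkhoffSum (hap : Aperiodic μ T) {U : X ≃ᵐ X}
    (hU : Measure.QuasiMeasurePreserving U μ μ) {c : ℕ → X → ℤ}
    (hcoc : ∀ n : ℕ, ∀ᵐ x ∂μ, (U.toEquiv ^ n) x = (T.toEquiv ^ c n x) x) (n : ℕ) :
    c n =ᵐ[μ] birkhoffSum U (c 1) n := by
  induction n with
  | zero =>
    filter_upwards [hcoc 0, hap.ae_injective_zpow] with x hx hinj
    exact hinj (by simpa using hx.symm)
  | succ n ih =>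
    have hstep : ∀ᵐ x ∂μ, U (U^[n] x) = (T.toEquiv ^ c 1 (U^[n] x)) (U^[n] x) := by
      simpa using (hU.iterate n).ae (hcoc 1)
    filter_upwards [hcoc (n + 1), hcoc n, hstep, ih, hap.ae_injective_zpow]
      with x hsucc hn hx hih hinj
    simp only [Equiv.Perm.coe_pow, MeasurableEquiv.coe_toEquiv] at hsucc hn
    rw [birkhoffSum_succ, ← hih]
    refine hinj ?_
    calc (T.toEquiv ^ c (n + 1) x) x = U (U^[n] x) :=
          hsucc.symm.trans (Function.iterate_succ_apply' U n x)
      _ = (T.toEquiv ^ c 1 (U^[n] x)) ((T.toEquiv ^ c n x) x) := by rw [hx, hn]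
      _ = (T.toEquiv ^ (c n x + c 1 (U^[n] x))) x := by
        rw [add_comm, zpow_add, Equiv.Perm.mul_apply]

end Aperiodic

theorem dphi_pow_div_n_tendsto_zero_general {X : Type*} [MeasurableSpace X]
    (μ : Measure X) [IsProbabilityMeasure μ]
    (φ : ℝ≥0 → ℝ≥0) (hmc : MetricCompatible φ)
    (hsub : Tendsto (fun t => φ t / t) atTop (nhds 0))
    (T : X ≃ᵐ X) (hap : Aperiodic μ T)
    (U : X ≃ᵐ X) (hU : MeasurePreserving (⇑U) μ μ)
    (c : ℕ → X → ℤ) (hc : ∀ n, Measurable (c n))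
    (hcoc : ∀ n : ℕ, ∀ᵐ x ∂μ, (U.toEquiv ^ n) x = (T.toEquiv ^ c n x) x)
    (hint : ∫⁻ x, (φ ((c 1 x).natAbs : ℝ≥0) : ℝ≥0∞) ∂μ < ⊤) :
    Tendsto (fun n : ℕ => (∫⁻ x, (φ ((c n x).natAbs : ℝ≥0) : ℝ≥0∞) ∂μ) / (n : ℝ≥0∞))
      atTop (nhds 0) := by
  obtain ⟨hadd, hmono, h0, -⟩ := hmc
  have hbound : ∀ M n : ℕ, ∫⁻ x, (φ (c n x).natAbs : ℝ≥0∞) ∂μ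
      ≤ φ (n * M) + n * ∫⁻ x, (phiTail φ M (c 1 x) : ℝ≥0∞) ∂μ := fun M n => by
    rw [lintegral_congr_ae ((hap.ae_eq_birkhoffSum hU.quasiMeasurePreserving hcoc n).mono
      fun x hx => by rw [hx])]
    exact lintegral_phi_natAbs_birkhoffSum_le hadd hmono h0 hU (hc 1) M n
  refine ENNReal.tendsto_zero_of_le_add (fun M => ?_) (tendsto_phi_mul_div_atTop hsub)
    (tendsto_lintegral_phiTail (hc 1) hint.ne)
  filter_upwards [eventually_ne_atTop 0] with n hn
  have hn' : (n : ℝ≥0∞) ≠ 0 := by exact_mod_cast hn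
  calc (∫⁻ x, (φ (c n x).natAbs : ℝ≥0∞) ∂μ) / n
      ≤ (φ (n * M) + n * ∫⁻ x, (phiTail φ M (c 1 x) : ℝ≥0∞) ∂μ) / n :=
        ENNReal.div_le_div_right (hbound M n) _
    _ = (φ (n * M) : ℝ≥0∞) / n + ∫⁻ x, (phiTail φ M (c 1 x) : ℝ≥0∞) ∂μ := by
        rw [ENNReal.add_div, mul_comm (n : ℝ≥0∞),
          ENNReal.mul_div_cancel_right hn' (ENNReal.natCast_ne_top n)]

/-- If `φ` is sublinear metric-compatible, `T` is aperiodic and `U ∈ [T]_φ` (its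
`T`-cocycle `c 1` is `φ`-integrable), then `d_{φ,T}(Uⁿ, id)/n → 0`, where `c n` is the
`T`-cocycle of `Uⁿ`. -/
theorem dphi_pow_div_n_tendsto_zero {X : Type*} [MeasurableSpace X] [StandardBorelSpace X]
    (μ : Measure X) [IsProbabilityMeasure μ] [NullSingletonClass μ]
    (φ : ℝ≥0 → ℝ≥0) (hmc : MetricCompatible φ)
    (hsub : Tendsto (fun t => φ t / t) atTop (nhds 0))
    (T : X ≃ᵐ X) (hT : MeasurePreserving (⇑T) μ μ) (hap : Aperiodic μ T)
    (U : X ≃ᵐ X) (hU : MeasurePreserving (⇑U) μ μ)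
    (c : ℕ → X → ℤ) (hc : ∀ n, Measurable (c n))
    (hcoc : ∀ n : ℕ, ∀ᵐ x ∂μ, (U.toEquiv ^ n) x = (T.toEquiv ^ c n x) x)
    (hint : ∫⁻ x, (φ ((c 1 x).natAbs : ℝ≥0) : ℝ≥0∞) ∂μ < ⊤) :
    Tendsto (fun n : ℕ => (∫⁻ x, (φ ((c n x).natAbs : ℝ≥0) : ℝ≥0∞) ∂μ) / (n : ℝ≥0∞))
      atTop (nhds 0) :=
  dphi_pow_div_n_tendsto_zero_general μ φ hmc hsub T hap U hU c hc hcoc hint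
end

section
/- Let φ : ℝ₊ → ℝ₊ be a sublinear function. Then there exists a sublinear metric-compatible function ψ : ℝ₊ → ℝ₊ such that φ(t) ≤ ψ(t) for all sufficiently large t. -/
/-!
Write `ε n = 2⁻¹ ^ n` and pick thresholds `B n → ∞` beyond which `φ t ≤ ε n * t`. Each truncated
linear function `t ↦ min (ε n * t) (ε n * B (n + 1))` is subadditive, monotone and vanishes at `0`,
and all of these survive taking the pointwise supremum `ψ`. Bounding the first `N` terms by
their truncation levels and the others by `ε N * t` gives `ψ t ≤ C_N + ε N * t`, so `ψ` is
sublinear. Finally, if `B m ≤ t < B (m + 1)` then `φ t ≤ ε m * t ≤ ε m * B (m + 1)`, so the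
`m`-th function already dominates `φ t`.
-/

open Filter Topology Finset
open scoped NNReal

theorem min_add_le_min_add_min {α : Type*} [AddCommMonoid α] [LinearOrder α]
    [CanonicallyOrderedAdd α] (a b c : α) : min (a + b) c ≤ min a c + min b c := by
  rcases le_total a c with ha | ha <;> rcases le_total b c with hb | hb <;> simp [*]

theorem Nat.exists_le_and_lt_succ_of_le {α : Type*} [LinearOrder α] {B : ℕ → α} {t : α}
    (hB : ∃ n, t < B n) (ht : B 0 ≤ t) : ∃ m, B m ≤ t ∧ t < B (m + 1) := by
  classical
  obtain ⟨m, hm⟩ : ∃ m, Nat.find hB = m + 1 :=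
    Nat.exists_eq_succ_of_ne_zero fun h => (h ▸ Nat.find_spec hB).not_ge ht
  exact ⟨m, not_lt.1 (Nat.find_min hB (by omega)), hm ▸ Nat.find_spec hB⟩

namespace NNReal

theorem eventually_le_mul_of_tendsto_div {φ : ℝ≥0 → ℝ≥0}
    (hφ : Tendsto (fun t => φ t / t) atTop (𝓝 0)) {δ : ℝ≥0} (hδ : 0 < δ) :
    ∀ᶠ t in atTop, φ t ≤ δ * t := by
  filter_upwards [hφ.eventually (gt_mem_nhds hδ), eventually_gt_atTop 0] with t hlt ht
  exact ((div_lt_iff₀ ht).1 hlt).le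

theorem exists_natCast_lt_and_forall_le_of_eventually {P : ℕ → ℝ≥0 → Prop}
    (hP : ∀ n, ∀ᶠ t in atTop, P n t) :
    ∃ B : ℕ → ℝ≥0, (∀ n : ℕ, (n : ℝ≥0) < B n) ∧ ∀ n t, B n ≤ t → P n t := by
  choose T hT using fun n => eventually_atTop.1 (hP n)
  refine ⟨fun n => max (T n) (n + 1), fun n => ?_, fun n t ht => hT n t (le_of_max_le_left ht)⟩
  exact (lt_add_one _).trans_le (le_max_right _ _)

noncomputable def truncatedSup (ε c : ℕ → ℝ≥0) (t : ℝ≥0) : ℝ≥0 :=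
  ⨆ n, min (ε n * t) (c n)

section truncatedSup

variable {ε c : ℕ → ℝ≥0}

theorem le_truncatedSup (hε : Antitone ε) (n : ℕ) (t : ℝ≥0) :
    min (ε n * t) (c n) ≤ truncatedSup ε c t := by
  refine le_ciSup (f := fun k => min (ε k * t) (c k)) ⟨ε 0 * t, ?_⟩ n
  rintro _ ⟨k, rfl⟩
  exact (min_le_left _ _).trans (mul_le_mul_left (hε k.zero_le) t)

theorem truncatedSup_add_le (hε : Antitone ε) (s t : ℝ≥0) :
    truncatedSup ε c (s + t) ≤ truncatedSup ε c s + truncatedSup ε c t := by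
  refine ciSup_le' fun n => ?_
  rw [mul_add]
  exact (min_add_le_min_add_min _ _ _).trans
    (add_le_add (le_truncatedSup hε n s) (le_truncatedSup hε n t))

theorem truncatedSup_mono (hε : Antitone ε) : Monotone (truncatedSup ε c) := fun _ t hst =>
  ciSup_le' fun n =>
    (min_le_min_right _ (mul_le_mul_right hst _)).trans (le_truncatedSup hε n t)

@[simp]
theorem truncatedSup_zero : truncatedSup ε c 0 = 0 := by
  simp [truncatedSup]

theorem truncatedSup_pos (hε : Antitone ε) {n : ℕ} (hεn : 0 < ε n) (hcn : 0 < c n) {t : ℝ≥0}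
    (ht : 0 < t) : 0 < truncatedSup ε c t :=
  (lt_min (mul_pos hεn ht) hcn).trans_le (le_truncatedSup hε n t)

theorem truncatedSup_le_sum_add_mul (hε : Antitone ε) (N : ℕ) (t : ℝ≥0) :
    truncatedSup ε c t ≤ ∑ n ∈ range N, c n + ε N * t := by
  refine ciSup_le' fun n => ?_
  rcases lt_or_ge n N with hn | hn
  · exact (min_le_right _ _).trans
      ((single_le_sum (fun _ _ => zero_le) (mem_range.2 hn)).trans le_self_add)
  · exact (min_le_left _ _).trans ((mul_le_mul_left (hε hn) t).trans le_add_self)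

theorem tendsto_truncatedSup_div (hε : Antitone ε) (hε₀ : Tendsto ε atTop (𝓝 0)) :
    Tendsto (fun t => truncatedSup ε c t / t) atTop (𝓝 0) := by
  refine tendsto_order.2 ⟨fun a ha => absurd ha not_lt_zero, fun δ hδ => ?_⟩
  obtain ⟨N, hN⟩ := (hε₀.eventually (gt_mem_nhds hδ)).exists
  set S := ∑ n ∈ range N, c n
  have hbound : Tendsto (fun t => S * t⁻¹ + ε N) atTop (𝓝 (ε N)) := by
    simpa using (tendsto_inv_atTop_zero.const_mul S).add_const (ε N)
  filter_upwards [hbound.eventually (gt_mem_nhds hN), eventually_gt_atTop 0] with t hlt ht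
  calc truncatedSup ε c t / t ≤ (S + ε N * t) / t := by
        gcongr; exact truncatedSup_le_sum_add_mul hε N t
    _ = S * t⁻¹ + ε N := by rw [add_div, mul_div_cancel_right₀ _ ht.ne', div_eq_mul_inv]
    _ < δ := hlt

theorem le_truncatedSup_of_le_mul (hε : Antitone ε) {B : ℕ → ℝ≥0}
    (hB : Tendsto B atTop atTop) {φ : ℝ≥0 → ℝ≥0} (hφ : ∀ n t, B n ≤ t → φ t ≤ ε n * t)
    {t : ℝ≥0} (ht : B 0 ≤ t) : φ t ≤ truncatedSup ε (fun n => ε n * B (n + 1)) t := by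
  obtain ⟨m, hBm, hBm'⟩ := Nat.exists_le_and_lt_succ_of_le (hB.eventually_gt_atTop t).exists ht
  have hφm := hφ m t hBm
  exact (le_min hφm (hφm.trans (mul_le_mul_right hBm'.le _))).trans
    (le_truncatedSup (c := fun n => ε n * B (n + 1)) hε m t)

end truncatedSup

end NNReal

open NNReal in
/-- Any sublinear `φ : ℝ₊ → ℝ₊` is eventually dominated by a sublinear metric-compatible
function `ψ` (subadditive, non-decreasing, vanishing exactly at `0`). -/
theorem exists_metric_compatible_dominating (φ : ℝ≥0 → ℝ≥0)
    (hφ : Tendsto (fun t => φ t / t) atTop (nhds 0)) :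
    ∃ ψ : ℝ≥0 → ℝ≥0,
      (∀ s t, ψ (s + t) ≤ ψ s + ψ t) ∧
      Monotone ψ ∧
      ψ 0 = 0 ∧
      (∀ t, 0 < t → 0 < ψ t) ∧
      Tendsto (fun t => ψ t / t) atTop (nhds 0) ∧
      ∃ t₀ : ℝ≥0, ∀ t, t₀ ≤ t → φ t ≤ ψ t := by
  set ε : ℕ → ℝ≥0 := fun n => 2⁻¹ ^ n
  have hε_anti : Antitone ε := pow_right_anti₀ (by norm_num) (by norm_num)
  have hε_lim : Tendsto ε atTop (𝓝 0) :=
    tendsto_pow_atTop_nhds_zero_of_lt_one (by norm_num) (by norm_num)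
  obtain ⟨B, hB_gt, hBφ⟩ := exists_natCast_lt_and_forall_le_of_eventually fun n =>
    eventually_le_mul_of_tendsto_div hφ (pow_pos (by norm_num : (0 : ℝ≥0) < 2⁻¹) n)
  have hB : Tendsto B atTop atTop :=
    tendsto_atTop_mono (fun n => (hB_gt n).le) tendsto_natCast_atTop_atTop
  refine ⟨truncatedSup ε fun n => ε n * B (n + 1), truncatedSup_add_le hε_anti,
    truncatedSup_mono hε_anti, truncatedSup_zero, fun t ht => ?_,
    tendsto_truncatedSup_div hε_anti hε_lim, B 0, fun t => le_truncatedSup_of_le_mul hε_anti hB hBφ⟩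
  exact truncatedSup_pos hε_anti (n := 0) (by simp [ε]) (by simpa [ε] using pos_of_gt (hB_gt 1)) ht
end

section
/- Let φ : ℝ₊ → ℝ₊ be a metric-compatible function, let T ∈ Aut(X,μ) be an aperiodic transformation, let A ⊆ X be a measurable subset, and let C > 0. Then ∫_A φ(n_{T,A}(x)) dμ ≤ C φ(1) μ(A) + sup_{t > C} φ(t)/t, where n_{T,A} is the first return time of T to A. -/
open MeasureTheory Filter Topology
open scoped ENNReal NNReal

/-! Split according to whether the return time `n` exceeds `C`. If not, subadditivity gives
`φ(n) ≤ n φ(1) ≤ C φ(1)`; otherwise `φ(n) ≤ S n` with `S = sup_{t > C} φ(t)/t`. Hence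
`∫_A φ(n) ≤ C φ(1) μ(A) + S ∫_A n`, and Kac's lemma `∫_A n ≤ 1` holds because the levels
`T^k {x ∈ A | k < n(x)}` of the Kakutani tower over `A` are pairwise disjoint. -/

section Subadditive

variable {φ : ℝ≥0 → ℝ≥0}

theorem apply_natCast_le_mul_apply_one (hsub : ∀ s t, φ (s + t) ≤ φ s + φ t) (h0 : φ 0 = 0)
    (n : ℕ) : φ n ≤ n * φ 1 := by
  induction n with
  | zero => simp [h0]
  | succ n ih =>
    calc φ (n + 1 : ℕ) ≤ φ n + φ 1 := by push_cast; exact hsub _ _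
      _ ≤ n * φ 1 + φ 1 := by gcongr
      _ = (n + 1 : ℕ) * φ 1 := by push_cast; ring

theorem coe_apply_le_iSup_div_mul {C t : ℝ≥0} (ht : C < t) :
    (φ t : ℝ≥0∞) ≤ (⨆ (s : ℝ≥0) (_ : C < s), (φ s : ℝ≥0∞) / s) * t := by
  have ht₀ : (t : ℝ≥0∞) ≠ 0 := ENNReal.coe_ne_zero.mpr (pos_of_gt ht).ne'
  calc (φ t : ℝ≥0∞) = (φ t : ℝ≥0∞) / t * t := (ENNReal.div_mul_cancel ht₀ ENNReal.coe_ne_top).symm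
    _ ≤ _ := by gcongr; exact le_iSup₂ (f := fun (s : ℝ≥0) (_ : C < s) => (φ s : ℝ≥0∞) / s) t ht

theorem coe_apply_natCast_le (hsub : ∀ s t, φ (s + t) ≤ φ s + φ t) (h0 : φ 0 = 0)
    (C : ℝ≥0) (n : ℕ) :
    (φ n : ℝ≥0∞) ≤ C * φ 1 + (⨆ (t : ℝ≥0) (_ : C < t), (φ t : ℝ≥0∞) / t) * n := by
  rcases le_or_gt (n : ℝ≥0) C with hn | hn
  · refine le_add_right ?_
    calc (φ n : ℝ≥0∞) ≤ ((n * φ 1 : ℝ≥0) : ℝ≥0∞) := by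
          exact_mod_cast apply_natCast_le_mul_apply_one hsub h0 n
      _ ≤ C * φ 1 := by push_cast; gcongr; exact_mod_cast hn
  · exact le_add_left (by exact_mod_cast coe_apply_le_iSup_div_mul hn)

end Subadditive

theorem pairwise_disjoint_preimage_iterate_of_notMem {α : Type*} {f g : α → α}
    (hfg : Function.LeftInverse f g) {A : Set α} {ρ : α → ℕ}
    (hρ : ∀ x ∈ A, ∀ m : ℕ, 0 < m → m < ρ x → f^[m] x ∉ A) :
    Pairwise (Function.onFun Disjoint fun k => g^[k] ⁻¹' {x ∈ A | k < ρ x}) := by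
  suffices ∀ j k, j < k → Disjoint (g^[j] ⁻¹' {x ∈ A | j < ρ x}) (g^[k] ⁻¹' {x ∈ A | k < ρ x}) from
    fun j k hjk => hjk.lt_or_gt.elim (this j k) fun h => (this k j h).symm
  intro j k hjk
  refine Set.disjoint_left.mpr fun z hj hk =>
    hρ _ hk.1 (k - j) (Nat.sub_pos_of_lt hjk) ((Nat.sub_le k j).trans_lt hk.2) ?_
  have : g^[k] z = g^[k - j] (g^[j] z) := by
    rw [← Function.iterate_add_apply]; congr 1; omega
  rw [this, (hfg.iterate (k - j)) (g^[j] z)]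
  exact hj.1

section Kac

variable {X : Type*} [MeasurableSpace X] {μ : Measure X}

theorem lintegral_natCast_eq_tsum_measure_lt {ρ : X → ℕ} (hρ : Measurable ρ) :
    ∫⁻ x, (ρ x : ℝ≥0∞) ∂μ = ∑' k : ℕ, μ {x | k < ρ x} := by
  have hcount (n : ℕ) : ∑' k : ℕ, (Set.Iio n).indicator (1 : ℕ → ℝ≥0∞) k = n := by
    rw [tsum_eq_sum (s := Finset.range n) fun k hk => by simp_all]
    simp [Set.indicator_apply, Finset.filter_true_of_mem fun k hk => Finset.mem_range.mp hk]
  have hmeas (k : ℕ) : MeasurableSet {x | k < ρ x} := hρ measurableSet_Ioi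
  calc ∫⁻ x, (ρ x : ℝ≥0∞) ∂μ = ∫⁻ x, ∑' k : ℕ, {x | k < ρ x}.indicator 1 x ∂μ := by
        simp_rw [← hcount, Set.indicator_apply]; rfl
    _ = ∑' k : ℕ, μ {x | k < ρ x} := by
        rw [lintegral_tsum fun k => (measurable_one.indicator (hmeas k)).aemeasurable]
        simp_rw [lintegral_indicator_one (hmeas _)]

variable {T : X ≃ᵐ X} {A : Set X} {ρ : X → ℕ}

theorem setLIntegral_le_measure_univ_of_notMem (hT : MeasurePreserving T μ μ)
    (hA : MeasurableSet A) (hρ : Measurable ρ)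
    (hret : ∀ x ∈ A, ∀ m : ℕ, 0 < m → m < ρ x → T^[m] x ∉ A) :
    ∫⁻ x in A, (ρ x : ℝ≥0∞) ∂μ ≤ μ Set.univ := by
  have hlevel (k : ℕ) : MeasurableSet {x | x ∈ A ∧ k < ρ x} := hA.inter (hρ measurableSet_Ioi)
  calc ∫⁻ x in A, (ρ x : ℝ≥0∞) ∂μ = ∑' k : ℕ, μ {x | x ∈ A ∧ k < ρ x} := by
        rw [lintegral_natCast_eq_tsum_measure_lt hρ]
        refine tsum_congr fun k => ?_
        rw [Measure.restrict_apply' hA, Set.inter_comm]; rfl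
    _ = ∑' k : ℕ, μ (T.symm^[k] ⁻¹' {x | x ∈ A ∧ k < ρ x}) := by
        simp_rw [(hT.symm.iterate _).measure_preimage (hlevel _).nullMeasurableSet]
    _ = μ (⋃ k : ℕ, T.symm^[k] ⁻¹' {x | x ∈ A ∧ k < ρ x}) :=
        (measure_iUnion (pairwise_disjoint_preimage_iterate_of_notMem
          (fun x => T.apply_symm_apply x) hret)
          fun k => (hT.symm.iterate k).measurable (hlevel k)).symm
    _ ≤ μ Set.univ := measure_mono (Set.subset_univ _)

theorem setLIntegral_le_measure_univ (hT : MeasurePreserving T μ μ) (hA : MeasurableSet A)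
    (hρ : Measurable ρ) (hret : ∀ᵐ x ∂μ, x ∈ A → ∀ m : ℕ, 0 < m → m < ρ x → T^[m] x ∉ A) :
    ∫⁻ x in A, (ρ x : ℝ≥0∞) ∂μ ≤ μ Set.univ := by
  obtain ⟨N, hbad, hN, hN0⟩ := exists_measurable_superset_of_null (ae_iff.mp hret)
  have hAN : A \ N =ᵐ[μ] A := sdiff_ae_eq_self.mpr (measure_mono_null Set.inter_subset_right hN0)
  rw [← setLIntegral_congr hAN]
  refine setLIntegral_le_measure_univ_of_notMem hT (hA.diff hN) hρ fun x hx m hm hmρ hTm => ?_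
  exact hx.2 (hbad fun h => h hx.1 m hm hmρ hTm.1)

end Kac

theorem lintegral_phi_first_return_time_le_general {X : Type*} [MeasurableSpace X]
    (μ : Measure X) [IsProbabilityMeasure μ]
    (φ : ℝ≥0 → ℝ≥0) (hmc : MetricCompatible φ)
    (T : X ≃ᵐ X) (hT : MeasurePreserving (⇑T) μ μ)
    (A : Set X) (hA : MeasurableSet A) (C : ℝ≥0)
    (ρ : X → ℕ) (hρ : Measurable ρ)
    (hret : ∀ᵐ x ∂μ, x ∈ A → (0 < ρ x ∧ (T.toEquiv ^ ρ x) x ∈ A ∧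
      ∀ m : ℕ, 0 < m → m < ρ x → (T.toEquiv ^ m) x ∉ A)) :
    ∫⁻ x in A, (φ (ρ x : ℝ≥0) : ℝ≥0∞) ∂μ ≤
      (C : ℝ≥0∞) * (φ 1 : ℝ≥0∞) * μ A +
        ⨆ (t : ℝ≥0) (_ : C < t), ((φ t : ℝ≥0∞) / (t : ℝ≥0∞)) := by
  obtain ⟨hsub, -, h0, -⟩ := hmc
  set S := ⨆ (t : ℝ≥0) (_ : C < t), ((φ t : ℝ≥0∞) / (t : ℝ≥0∞))
  have hkac : ∫⁻ x in A, (ρ x : ℝ≥0∞) ∂μ ≤ 1 := by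
    refine (setLIntegral_le_measure_univ hT hA hρ ?_).trans_eq measure_univ
    filter_upwards [hret] with x hx hxA
    exact (hx hxA).2.2
  calc ∫⁻ x in A, (φ (ρ x : ℝ≥0) : ℝ≥0∞) ∂μ
      ≤ ∫⁻ x in A, ((C : ℝ≥0∞) * φ 1 + S * ρ x) ∂μ :=
        lintegral_mono fun x => coe_apply_natCast_le hsub h0 C (ρ x)
    _ = C * φ 1 * μ A + S * ∫⁻ x in A, (ρ x : ℝ≥0∞) ∂μ := by
        rw [lintegral_add_left measurable_const, lintegral_const_mul S (by fun_prop),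
          setLIntegral_const]
    _ ≤ C * φ 1 * μ A + S := by gcongr; exact mul_le_of_le_one_right' hkac

/-- For a metric-compatible `φ`, an aperiodic `T`, a measurable set `A` and `C > 0`,
the first return time `ρ = n_{T,A}` satisfies
`∫_A φ(ρ) dμ ≤ C φ(1) μ(A) + sup_{t > C} φ(t)/t`. -/
theorem lintegral_phi_first_return_time_le {X : Type*} [MeasurableSpace X]
    [StandardBorelSpace X] (μ : Measure X) [IsProbabilityMeasure μ] [NullSingletonClass μ]
    (φ : ℝ≥0 → ℝ≥0) (hmc : MetricCompatible φ)
    (T : X ≃ᵐ X) (hT : MeasurePreserving (⇑T) μ μ) (hap : Aperiodic μ T)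
    (A : Set X) (hA : MeasurableSet A) (C : ℝ≥0) (hC : 0 < C)
    (ρ : X → ℕ) (hρ : Measurable ρ)
    (hret : ∀ᵐ x ∂μ, x ∈ A → (0 < ρ x ∧ (T.toEquiv ^ ρ x) x ∈ A ∧
      ∀ m : ℕ, 0 < m → m < ρ x → (T.toEquiv ^ m) x ∉ A)) :
    ∫⁻ x in A, (φ (ρ x : ℝ≥0) : ℝ≥0∞) ∂μ ≤
      (C : ℝ≥0∞) * (φ 1 : ℝ≥0∞) * μ A +
        ⨆ (t : ℝ≥0) (_ : C < t), ((φ t : ℝ≥0∞) / (t : ℝ≥0∞)) :=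
  lintegral_phi_first_return_time_le_general μ φ hmc T hT A hA C ρ hρ hret
end

section
/- Let T ∈ Aut(X,μ) be an aperiodic transformation and let φ : ℝ₊ → ℝ₊ be a metric-compatible function. For every U ∈ [T]_φ and every measurable subset A ⊆ X, the first return map U_A satisfies ∫_X φ(|c_{U_A}(x)|) dμ ≤ ∫_X φ(|c_U(x)|) dμ, where c_{U_A} and c_U are the T-cocycles of U_A and U respectively; in particular U_A ∈ [T]_φ. -/
open MeasureTheory Filter Topology
open scoped ENNReal NNReal

/-- `V` is the first return map of `U` to `A`: a.e., for `x ∈ A`, `V x = Uⁿ x` where `n`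
is the first return time of `x` to `A`, and `V x = x` for `x ∉ A`. -/
def IsFirstReturnMap {X : Type*} [MeasurableSpace X] (μ : Measure X) (U V : X ≃ᵐ X)
    (A : Set X) : Prop :=
  ∀ᵐ x ∂μ, (x ∈ A → ∃ n : ℕ, 0 < n ∧ (U.toEquiv ^ n) x ∈ A ∧
      (∀ m : ℕ, 0 < m → m < n → (U.toEquiv ^ m) x ∉ A) ∧ V x = (U.toEquiv ^ n) x) ∧
    (x ∉ A → V x = x)

/-!
Kac's tower argument. For `x ∈ A` with first return time `n`, aperiodicity of `T` forces
`c_{U_A}(x) = ∑_{i<n} c_U(Uⁱ x)`, so by subadditivity and monotonicity of `φ`,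
`φ |c_{U_A}(x)| ≤ ∑_{i<n} φ |c_U(Uⁱ x)|`. Integrating, the right-hand side becomes the integral of
`φ |c_U|` over the Kac tower `⋃ₖ Uᵏ {x ∈ A | n(x) > k}`, whose levels are pairwise disjoint.
-/

theorem MetricCompatible.apply_natAbs_sum_le {φ : ℝ≥0 → ℝ≥0} (hφ : MetricCompatible φ)
    {ι : Type*} (s : Finset ι) (a : ι → ℤ) :
    (φ (∑ i ∈ s, a i).natAbs : ℝ≥0∞) ≤ ∑ i ∈ s, (φ (a i).natAbs : ℝ≥0∞) := by
  obtain ⟨hsub, hmono, hzero, -⟩ := hφ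
  refine Finset.le_sum_of_subadditive (fun z : ℤ => (φ z.natAbs : ℝ≥0∞)) (by simp [hzero])
    (fun a b => ?_) s a
  have : φ (a + b).natAbs ≤ φ a.natAbs + φ b.natAbs :=
    (hmono (by exact_mod_cast Int.natAbs_add_le a b)).trans (hsub _ _)
  exact_mod_cast this

namespace Equiv.Perm

variable {X : Type*} {t : Perm X} {x : X}

theorem zpow_apply_injective_of_forall_ne (h : ∀ n : ℤ, n ≠ 0 → (t ^ n) x ≠ x) :
    Function.Injective fun n : ℤ => (t ^ n) x := by
  intro m n hmn
  by_contra hne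
  refine h (m - n) (sub_ne_zero.2 hne) ?_
  simp only at hmn
  rw [sub_eq_neg_add, zpow_add, mul_apply, hmn, ← mul_apply, ← zpow_add, neg_add_cancel,
    zpow_zero, one_apply]

theorem iterate_eq_zpow_sum_of_cocycle {f : X → X} {c : X → ℤ} {n : ℕ}
    (h : ∀ i < n, f (f^[i] x) = (t ^ c (f^[i] x)) (f^[i] x)) :
    f^[n] x = (t ^ ∑ i ∈ Finset.range n, c (f^[i] x)) x := by
  induction n with
  | zero => simp
  | succ n ih =>
    rw [Function.iterate_succ_apply', h n n.lt_succ_self, ih fun i hi => h i (by omega),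
      Finset.sum_range_succ, add_comm, zpow_add, mul_apply, ← ih fun i hi => h i (by omega)]

end Equiv.Perm

section Tower

variable {X : Type*} (f : X → X) (A : Set X)

/-- The points of `A` whose first return time exceeds `k`; their images under `f^[k]` are the
levels of the Kac tower over `A`. -/
def noReturnUpTo (k : ℕ) : Set X :=
  {x | x ∈ A ∧ ∀ m, 0 < m → m ≤ k → f^[m] x ∉ A}

variable {f A}

theorem pairwise_disjoint_image_noReturnUpTo (hf : Function.Injective f) :
    Pairwise (Function.onFun Disjoint fun k => f^[k] '' noReturnUpTo f A k) := by
  suffices ∀ k j, k < j → Disjoint (f^[k] '' noReturnUpTo f A k) (f^[j] '' noReturnUpTo f A j) from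
    fun k j hkj => hkj.lt_or_gt.elim (this k j) fun h => (this j k h).symm
  intro k j hkj
  rw [Set.disjoint_left]
  rintro _ ⟨x, ⟨hxA, -⟩, rfl⟩ ⟨y, ⟨-, hy⟩, hxy⟩
  have : f^[j - k] y = x := by
    apply hf.iterate k
    rw [← Function.iterate_add_apply, Nat.add_sub_cancel' hkj.le, hxy]
  exact hy (j - k) (by omega) (by omega) (this ▸ hxA)

theorem measurableSet_noReturnUpTo [MeasurableSpace X] (hf : Measurable f) (hA : MeasurableSet A)
    (k : ℕ) : MeasurableSet (noReturnUpTo f A k) := by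
  have : noReturnUpTo f A k = A ∩ ⋂ (m : ℕ) (_ : 0 < m) (_ : m ≤ k), f^[m] ⁻¹' Aᶜ := by
    ext x; simp [noReturnUpTo]
  rw [this]
  exact hA.inter <| .iInter fun m => .iInter fun _ => .iInter fun _ => hf.iterate m hA.compl

theorem sum_range_le_tsum_indicator_noReturnUpTo {g : ℕ → X → ℝ≥0∞} {x : X} {n : ℕ}
    (hx : ∀ i < n, x ∈ noReturnUpTo f A i) :
    ∑ i ∈ Finset.range n, g i x ≤ ∑' k, (noReturnUpTo f A k).indicator (g k) x := by
  calc ∑ i ∈ Finset.range n, g i x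
      = ∑ i ∈ Finset.range n, (noReturnUpTo f A i).indicator (g i) x :=
        Finset.sum_congr rfl fun i hi => (Set.indicator_of_mem (hx i (by simpa using hi)) _).symm
    _ ≤ _ := ENNReal.sum_le_tsum _

end Tower

theorem MeasurableEmbedding.iterate {X : Type*} [MeasurableSpace X] {f : X → X}
    (hf : MeasurableEmbedding f) (n : ℕ) : MeasurableEmbedding f^[n] := by
  induction n with
  | zero => exact MeasurableEmbedding.id
  | succ n ih => exact ih.comp hf

theorem lintegral_tsum_indicator_noReturnUpTo_le {X : Type*} [MeasurableSpace X] {μ : Measure X}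
    {f : X → X} (hfμ : MeasurePreserving f μ μ) (hf : MeasurableEmbedding f)
    {A : Set X} (hA : MeasurableSet A) {g : X → ℝ≥0∞} (hg : Measurable g) :
    ∫⁻ x, ∑' k, (noReturnUpTo f A k).indicator (fun y => g (f^[k] y)) x ∂μ ≤ ∫⁻ x, g x ∂μ := by
  have hB := measurableSet_noReturnUpTo hf.measurable hA
  calc ∫⁻ x, ∑' k, (noReturnUpTo f A k).indicator (fun y => g (f^[k] y)) x ∂μ
      = ∑' k, ∫⁻ x in noReturnUpTo f A k, g (f^[k] x) ∂μ := by
        refine (lintegral_tsum fun k => ?_).trans ?_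
        · exact ((hg.comp (hf.measurable.iterate k)).indicator (hB k)).aemeasurable
        · simp_rw [lintegral_indicator (hB _)]
    _ = ∑' k, ∫⁻ x in f^[k] '' noReturnUpTo f A k, g x ∂μ := by
        simp_rw [(hfμ.iterate _).setLIntegral_comp_emb (hf.iterate _)]
    _ = ∫⁻ x in ⋃ k, f^[k] '' noReturnUpTo f A k, g x ∂μ :=
        (lintegral_iUnion (fun k => (hf.iterate k).measurableSet_image.2 (hB k))
          (pairwise_disjoint_image_noReturnUpTo hf.injective) g).symm
    _ ≤ ∫⁻ x, g x ∂μ := setLIntegral_le_lintegral _ _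

theorem IsFirstReturnMap.ae_exists_cocycle_eq_sum {X : Type*} [MeasurableSpace X]
    {μ : Measure X} {T U V : X ≃ᵐ X} {A : Set X} (hfr : IsFirstReturnMap μ U V A)
    (hap : Aperiodic μ T) (hU : Measure.QuasiMeasurePreserving U μ μ)
    {cU cV : X → ℤ} (hUcoc : ∀ᵐ x ∂μ, U x = (T.toEquiv ^ cU x) x)
    (hVcoc : ∀ᵐ x ∂μ, V x = (T.toEquiv ^ cV x) x) :
    ∀ᵐ x ∂μ, ∃ n, (∀ i < n, x ∈ noReturnUpTo U A i) ∧
      cV x = ∑ i ∈ Finset.range n, cU (U^[i] x) := by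
  filter_upwards [hfr, hVcoc, hap, ae_all_iff.2 fun k => (hU.iterate k).ae hUcoc]
    with x ⟨hxA, hxAc⟩ hVx hapx horb
  have hinj := Equiv.Perm.zpow_apply_injective_of_forall_ne hapx
  by_cases hx : x ∈ A
  · obtain ⟨n, -, -, hmin, hVeq⟩ := hxA hx
    refine ⟨n, fun i hi => ⟨hx, fun m hm hmi => hmin m hm (by omega)⟩, hinj ?_⟩
    change (T.toEquiv ^ cV x) x = (T.toEquiv ^ _) x
    rw [← Equiv.Perm.iterate_eq_zpow_sum_of_cocycle fun i _ => horb i, ← hVx, hVeq]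
    rfl
  · exact ⟨0, by simp, hinj (by simp [← hVx, hxAc hx])⟩

theorem lintegral_phi_cocycle_first_return_le_general {X : Type*} [MeasurableSpace X] (μ : Measure X)
    (φ : ℝ≥0 → ℝ≥0) (hmc : MetricCompatible φ)
    (T : X ≃ᵐ X) (hap : Aperiodic μ T)
    (U : X ≃ᵐ X) (hU : MeasurePreserving (⇑U) μ μ)
    (cU : X → ℤ) (hcU : Measurable cU) (hUcoc : ∀ᵐ x ∂μ, U x = (T.toEquiv ^ cU x) x)
    (A : Set X) (hA : MeasurableSet A)
    (V : X ≃ᵐ X) (hfr : IsFirstReturnMap μ U V A)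
    (cV : X → ℤ) (hVcoc : ∀ᵐ x ∂μ, V x = (T.toEquiv ^ cV x) x) :
    ∫⁻ x, (φ ((cV x).natAbs : ℝ≥0) : ℝ≥0∞) ∂μ ≤
      ∫⁻ x, (φ ((cU x).natAbs : ℝ≥0) : ℝ≥0∞) ∂μ := by
  set g : X → ℝ≥0∞ := fun x => (φ ((cU x).natAbs : ℝ≥0) : ℝ≥0∞)
  have hg : Measurable g :=
    (hmc.2.1.measurable.comp
      ((measurable_of_countable fun z : ℤ => (z.natAbs : ℝ≥0)).comp hcU)).coe_nnreal_ennreal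
  calc ∫⁻ x, (φ ((cV x).natAbs : ℝ≥0) : ℝ≥0∞) ∂μ
      ≤ ∫⁻ x, ∑' k, (noReturnUpTo U A k).indicator (fun y => g (U^[k] y)) x ∂μ := by
        refine lintegral_mono_ae ?_
        filter_upwards [hfr.ae_exists_cocycle_eq_sum hap hU.quasiMeasurePreserving hUcoc hVcoc]
          with x ⟨n, hxB, hcV⟩
        rw [hcV]
        exact (hmc.apply_natAbs_sum_le _ _).trans (sum_range_le_tsum_indicator_noReturnUpTo hxB)
    _ ≤ ∫⁻ x, g x ∂μ :=
        lintegral_tsum_indicator_noReturnUpTo_le hU U.measurableEmbedding hA hg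

/-- **Kac-type inequality for `φ`-integrable full groups**: for `U ∈ [T]_φ` with
`T`-cocycle `cU` and any measurable `A`, the first return map `V = U_A` with `T`-cocycle
`cV` satisfies `∫ φ(|cV|) dμ ≤ ∫ φ(|cU|) dμ`; in particular `U_A ∈ [T]_φ`. -/
theorem lintegral_phi_cocycle_first_return_le {X : Type*} [MeasurableSpace X]
    [StandardBorelSpace X] (μ : Measure X) [IsProbabilityMeasure μ] [NullSingletonClass μ]
    (φ : ℝ≥0 → ℝ≥0) (hmc : MetricCompatible φ)
    (T : X ≃ᵐ X) (hT : MeasurePreserving (⇑T) μ μ) (hap : Aperiodic μ T)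
    (U : X ≃ᵐ X) (hU : MeasurePreserving (⇑U) μ μ)
    (cU : X → ℤ) (hcU : Measurable cU) (hUcoc : ∀ᵐ x ∂μ, U x = (T.toEquiv ^ cU x) x)
    (hUint : ∫⁻ x, (φ ((cU x).natAbs : ℝ≥0) : ℝ≥0∞) ∂μ < ⊤)
    (A : Set X) (hA : MeasurableSet A)
    (V : X ≃ᵐ X) (hV : MeasurePreserving (⇑V) μ μ) (hfr : IsFirstReturnMap μ U V A)
    (cV : X → ℤ) (hcV : Measurable cV) (hVcoc : ∀ᵐ x ∂μ, V x = (T.toEquiv ^ cV x) x) :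
    ∫⁻ x, (φ ((cV x).natAbs : ℝ≥0) : ℝ≥0∞) ∂μ ≤
      ∫⁻ x, (φ ((cU x).natAbs : ℝ≥0) : ℝ≥0∞) ∂μ :=
  lintegral_phi_cocycle_first_return_le_general μ φ hmc T hap U hU cU hcU hUcoc A hA V hfr cV hVcoc
end

section
/- Let φ be a metric-compatible function, let f : X → ℤ be a measurable function with ∫_X φ(|f(x)|) dμ < ∞, and let (f_n) be a sequence of measurable functions f_n : X → ℤ converging in measure to f. If limsup_n ∫_X φ(|f_n(x)|) dμ ≤ ∫_X φ(|f(x)|) dμ, then ∫_X φ(|f_n(x) − f(x)|) dμ → 0 as n → ∞. -/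
open MeasureTheory Filter Topology
open scoped ENNReal NNReal

namespace MetricCompatible

theorem apply_natAbs_sub_le {φ : ℝ≥0 → ℝ≥0} (hφ : MetricCompatible φ) (a b : ℤ) :
    φ (a - b).natAbs ≤ φ a.natAbs + φ b.natAbs :=
  calc φ (a - b).natAbs ≤ φ (a.natAbs + b.natAbs : ℕ) :=
        hφ.2.1 (Nat.cast_le.2 (Int.natAbs_sub_le a b))
    _ ≤ φ a.natAbs + φ b.natAbs := by simpa only [Nat.cast_add] using hφ.1 _ _

end MetricCompatible

section Scheffe

variable {X ι : Type*} [MeasurableSpace X] {μ : Measure X}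

theorem setLIntegral_add_lintegral_eq_of_eqOn_compl {u v : X → ℝ≥0∞} {A : Set X}
    (hA : MeasurableSet A) (huv : Set.EqOn u v Aᶜ) :
    ∫⁻ x in A, u x ∂μ + ∫⁻ x, v x ∂μ = ∫⁻ x, u x ∂μ + ∫⁻ x in A, v x ∂μ := by
  have hu := lintegral_add_compl u hA (μ := μ)
  rw [setLIntegral_congr_fun hA.compl huv] at hu
  rw [← hu, ← lintegral_add_compl v hA]
  ac_rfl

theorem tendsto_setLIntegral_zero_of_limsup_le {l : Filter ι} {u : ι → X → ℝ≥0∞}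
    {v : X → ℝ≥0∞} {A : ι → Set X} (hA : ∀ i, MeasurableSet (A i))
    (hμA : Tendsto (fun i => μ (A i)) l (𝓝 0)) (hv : ∫⁻ x, v x ∂μ ≠ ∞)
    (huv : ∀ i, Set.EqOn (u i) v (A i)ᶜ)
    (hlimsup : limsup (fun i => ∫⁻ x, u i x ∂μ) l ≤ ∫⁻ x, v x ∂μ) :
    Tendsto (fun i => ∫⁻ x in A i, u i x ∂μ) l (𝓝 0) := by
  rcases l.eq_or_neBot with rfl | _
  · exact tendsto_bot
  have hvA : Tendsto (fun i => ∫⁻ x in A i, v x ∂μ) l (𝓝 0) := tendsto_setLIntegral_zero hv hμA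
  have hlimsupA : limsup (fun i => ∫⁻ x in A i, u i x ∂μ) l + ∫⁻ x, v x ∂μ ≤ 0 + ∫⁻ x, v x ∂μ :=
    calc limsup (fun i => ∫⁻ x in A i, u i x ∂μ) l + ∫⁻ x, v x ∂μ
        = limsup (fun i => ∫⁻ x in A i, u i x ∂μ + ∫⁻ x, v x ∂μ) l :=
          (limsup_add_const _ _ _ (by isBoundedDefault) (by isBoundedDefault)).symm
      _ = limsup (fun i => ∫⁻ x, u i x ∂μ + ∫⁻ x in A i, v x ∂μ) l := by
          simp only [setLIntegral_add_lintegral_eq_of_eqOn_compl (hA _) (huv _)]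
      _ = limsup (fun i => ∫⁻ x, u i x ∂μ) l := ENNReal.limsup_add_of_right_tendsto_zero hvA _
      _ ≤ 0 + ∫⁻ x, v x ∂μ := hlimsup.trans_eq (zero_add _).symm
  exact tendsto_of_le_liminf_of_limsup_le zero_le (ENNReal.le_of_add_le_add_right hv hlimsupA)

end Scheffe

theorem scheffe_phi_integrable_general {X : Type*} [MeasurableSpace X]
    (μ : Measure X)
    (φ : ℝ≥0 → ℝ≥0) (hmc : MetricCompatible φ)
    (f : X → ℤ) (hf : Measurable f)
    (hfint : ∫⁻ x, (φ ((f x).natAbs : ℝ≥0) : ℝ≥0∞) ∂μ < ⊤)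
    (fs : ℕ → X → ℤ) (hfs : ∀ n, Measurable (fs n))
    (hmeasconv : Tendsto (fun n => μ {x | fs n x ≠ f x}) atTop (nhds 0))
    (hlimsup : Filter.limsup (fun n => ∫⁻ x, (φ ((fs n x).natAbs : ℝ≥0) : ℝ≥0∞) ∂μ) atTop ≤
      ∫⁻ x, (φ ((f x).natAbs : ℝ≥0) : ℝ≥0∞) ∂μ) :
    Tendsto (fun n => ∫⁻ x, (φ ((fs n x - f x).natAbs : ℝ≥0) : ℝ≥0∞) ∂μ)
      atTop (nhds 0) := by
  set A : ℕ → Set X := fun n => {x | fs n x ≠ f x}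
  have hA : ∀ n, MeasurableSet (A n) := fun n => (measurableSet_eq_fun (hfs n) hf).compl
  have hfsA : Tendsto (fun n => ∫⁻ x in A n, (φ ((fs n x).natAbs : ℝ≥0) : ℝ≥0∞) ∂μ) atTop (𝓝 0) :=
    tendsto_setLIntegral_zero_of_limsup_le hA hmeasconv hfint.ne
      (fun n x hx => by rw [not_not.1 hx]) hlimsup
  have hfA : Tendsto (fun n => ∫⁻ x in A n, (φ ((f x).natAbs : ℝ≥0) : ℝ≥0∞) ∂μ) atTop (𝓝 0) :=
    tendsto_setLIntegral_zero hfint.ne hmeasconv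
  refine tendsto_of_tendsto_of_tendsto_of_le_of_le tendsto_const_nhds (by simpa using hfsA.add hfA)
    (fun _ => zero_le) fun n => ?_
  have hsupp : Function.support (fun x => (φ ((fs n x - f x).natAbs : ℝ≥0) : ℝ≥0∞)) ⊆ A n :=
    fun x hx heq => hx (by simp [sub_eq_zero.2 heq, hmc.2.2.1])
  calc ∫⁻ x, (φ ((fs n x - f x).natAbs : ℝ≥0) : ℝ≥0∞) ∂μ
      = ∫⁻ x in A n, (φ ((fs n x - f x).natAbs : ℝ≥0) : ℝ≥0∞) ∂μ :=
        (setLIntegral_eq_of_support_subset hsupp).symm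
    _ ≤ ∫⁻ x in A n, (φ ((fs n x).natAbs : ℝ≥0) + φ ((f x).natAbs : ℝ≥0) : ℝ≥0∞) ∂μ :=
        lintegral_mono fun x => ENNReal.coe_le_coe.2 <| hmc.apply_natAbs_sub_le (fs n x) (f x)
    _ = _ :=
        lintegral_add_right _ ((Measurable.of_discrete (f := fun k : ℤ => (φ k.natAbs : ℝ≥0∞))).comp hf)

/-- **A Scheffé-type lemma** for `ℤ`-valued `φ`-integrable functions: if `fs n → f` in
measure and `limsup ∫ φ(|fs n|) ≤ ∫ φ(|f|) < ∞`, then `∫ φ(|fs n − f|) → 0`. -/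
theorem scheffe_phi_integrable {X : Type*} [MeasurableSpace X]
    (μ : Measure X) [IsProbabilityMeasure μ]
    (φ : ℝ≥0 → ℝ≥0) (hmc : MetricCompatible φ)
    (f : X → ℤ) (hf : Measurable f)
    (hfint : ∫⁻ x, (φ ((f x).natAbs : ℝ≥0) : ℝ≥0∞) ∂μ < ⊤)
    (fs : ℕ → X → ℤ) (hfs : ∀ n, Measurable (fs n))
    (hmeasconv : Tendsto (fun n => μ {x | fs n x ≠ f x}) atTop (nhds 0))
    (hlimsup : Filter.limsup (fun n => ∫⁻ x, (φ ((fs n x).natAbs : ℝ≥0) : ℝ≥0∞) ∂μ) atTop ≤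
      ∫⁻ x, (φ ((f x).natAbs : ℝ≥0) : ℝ≥0∞) ∂μ) :
    Tendsto (fun n => ∫⁻ x, (φ ((fs n x - f x).natAbs : ℝ≥0) : ℝ≥0∞) ∂μ)
      atTop (nhds 0) :=
  scheffe_phi_integrable_general μ φ hmc f hf hfint fs hfs hmeasconv hlimsup
end

section
/- Let T be an aperiodic measure-preserving transformation of a standard atomless probability space (X,μ) and suppose U ∈ Aut(X,μ) has the same orbits as T and that for almost every x ∈ X the symmetric difference {Tⁿ(x) : n ≥ 0} △ {Uⁿ(x) : n ≥ 0} of the forward T-orbit and forward U-orbit of x is finite. Then T and U are conjugate: there exists S ∈ Aut(X,μ) with S U S⁻¹ = T (up to null sets). -/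
open MeasureTheory Filter Topology
open scoped ENNReal NNReal symmDiff

/-- Two transformations of `(X, μ)` have the same orbits if for almost every `x`
the `T`-orbit of `x` coincides with the `U`-orbit of `x`. -/
def SameOrbits {X : Type*} [MeasurableSpace X] (μ : Measure X) (T U : X ≃ᵐ X) : Prop :=
  ∀ᵐ x ∂μ, {y | ∃ n : ℤ, (T.toEquiv ^ n) x = y} = {y | ∃ n : ℤ, (U.toEquiv ^ n) x = y}

/-!
For a point x let B(x) be the set of k ∈ ℤ such that Tᵏ x lies in the forward U-orbit of x.
Aperiodicity and the finiteness hypothesis make B(x) differ from ℕ by a finite set, so it has an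
index f(x) = #(ℕ \ B(x)) - #(B(x) \ ℕ). If U x = Tᶜ x then B(U x) = (B(x) \ {0}) - c, whence
f(U x) = f(x) + 1 - c; this says exactly that S x = T^f(x) x satisfies S (U x) = T (S x). On a
conull set invariant under T and U the map S is a bijection, and it is countably piecewise a power
of T, hence a measure-preserving measurable equivalence.
-/

namespace Set

variable {α β : Type*}

-- Meaningful only when `A ∆ B` is finite, since `ncard` of an infinite set is `0`.
noncomputable def relIndex (A B : Set α) : ℤ := (A \ B).ncard - (B \ A).ncard

lemma relIndex_eq_ncard_inter_sub_ncard_inter {A B W : Set α} (hW : W.Finite)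
    (hAB : A ∆ B ⊆ W) : relIndex A B = (A ∩ W).ncard - (B ∩ W).ncard := by
  have hA : (A ∩ W) \ B = A \ B :=
    inter_sdiff_right_comm.trans (inter_eq_left.2 (subset_union_left.trans hAB))
  have hB : (B ∩ W) \ A = B \ A :=
    inter_sdiff_right_comm.trans (inter_eq_left.2 (subset_union_right.trans hAB))
  rw [relIndex, ← ncard_inter_add_ncard_sdiff_eq_ncard (A ∩ W) B (hW.inter_of_right A),
    ← ncard_inter_add_ncard_sdiff_eq_ncard (B ∩ W) A (hW.inter_of_right B), hA, hB,
    inter_right_comm A W B, inter_right_comm B W A, inter_comm A B]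
  push_cast
  ring

lemma relIndex_add_relIndex {A B C : Set α} (hAB : (A ∆ B).Finite) (hBC : (B ∆ C).Finite) :
    relIndex A B + relIndex B C = relIndex A C := by
  have hW := hAB.union hBC
  rw [relIndex_eq_ncard_inter_sub_ncard_inter hW subset_union_left,
    relIndex_eq_ncard_inter_sub_ncard_inter hW subset_union_right,
    relIndex_eq_ncard_inter_sub_ncard_inter hW (symmDiff_triangle A B C)]
  ring

lemma relIndex_preimage_equiv (e : α ≃ β) (A B : Set β) :
    relIndex (e ⁻¹' A) (e ⁻¹' B) = relIndex A B := by
  simp only [relIndex, ← preimage_sdiff,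
    ncard_preimage_of_injective_subset_range e.injective (e.surjective.range_eq ▸ subset_univ _)]

lemma relIndex_sdiff_singleton {A : Set α} {a : α} (ha : a ∈ A) : relIndex A (A \ {a}) = 1 := by
  simp [relIndex, sdiff_sdiff_cancel_left (singleton_subset_iff.2 ha)]

lemma relIndex_Ici_Ici (a b : ℤ) : relIndex (Ici a) (Ici b) = b - a := by
  simp only [relIndex, Ici_sdiff_Ici, ← Finset.coe_Ico, ncard_coe_finset, Int.card_Ico]
  omega

lemma finite_Ici_symmDiff_Ici (a b : ℤ) : (Ici a ∆ Ici b).Finite := by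
  rw [symmDiff_def, Ici_sdiff_Ici, Ici_sdiff_Ici]
  exact (finite_Ico a b).union (finite_Ico b a)

end Set

open Set Function

namespace Equiv.Perm

variable {X : Type*} (σ τ : Perm X)

def forwardExponents (x : X) : Set ℤ := {k | ∃ m : ℕ, (τ ^ m) x = (σ ^ k) x}

noncomputable def forwardIndex (x : X) : ℤ := relIndex (Ici 0) (forwardExponents σ τ x)

variable {σ τ} {x : X}

lemma injective_zpow_apply (hσ : ∀ n : ℤ, n ≠ 0 → (σ ^ n) x ≠ x) :
    Injective fun n : ℤ => (σ ^ n) x := by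
  intro a b (h : (σ ^ a) x = (σ ^ b) x)
  by_contra hab
  apply hσ (a - b) (sub_ne_zero.2 hab)
  rw [sub_eq_neg_add, zpow_add, mul_apply, h, ← mul_apply, ← zpow_add, neg_add_cancel, zpow_zero,
    one_apply]

lemma zpow_apply_ne_self_of_orbit_eq (hσ : ∀ n : ℤ, n ≠ 0 → (σ ^ n) x ≠ x)
    (horb : {y | ∃ n : ℤ, (σ ^ n) x = y} = {y | ∃ n : ℤ, (τ ^ n) x = y}) :
    ∀ n : ℤ, n ≠ 0 → (τ ^ n) x ≠ x := by
  intro n hn hfix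
  have hperiod : 0 < MulAction.period τ x := by
    replace hfix : τ ^ n • x = x := hfix
    rw [MulAction.zpow_smul_eq_iff_period_dvd] at hfix
    exact Nat.pos_of_ne_zero fun h => hn (by simpa [h] using hfix)
  have hfinite : {y | ∃ n : ℤ, (τ ^ n) x = y}.Finite := by
    refine ((finite_Ico 0 (MulAction.period τ x : ℤ)).image fun j => (τ ^ j) x).subset ?_
    rintro _ ⟨m, rfl⟩
    exact ⟨m % MulAction.period τ x,
      ⟨Int.emod_nonneg _ (by omega), Int.emod_lt_of_pos _ (by omega)⟩,
      MulAction.zpow_mod_period_smul m (g := τ) (a := x)⟩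
  rw [← horb] at hfinite
  exact infinite_range_of_injective (injective_zpow_apply hσ) hfinite

lemma Ici_symmDiff_forwardExponents (hσ : ∀ n : ℤ, n ≠ 0 → (σ ^ n) x ≠ x) :
    Ici 0 ∆ forwardExponents σ τ x = (fun k : ℤ => (σ ^ k) x) ⁻¹'
      ({y | ∃ n : ℕ, (σ ^ n) x = y} ∆ {y | ∃ n : ℕ, (τ ^ n) x = y}) := by
  rw [preimage_symmDiff]
  congr 1
  ext k
  simp only [mem_Ici, mem_preimage, mem_ofPred_eq]
  constructor
  · intro hk
    exact ⟨k.toNat, by rw [← zpow_natCast, Int.toNat_of_nonneg hk]⟩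
  · rintro ⟨n, hn⟩
    rw [← zpow_natCast] at hn
    exact injective_zpow_apply hσ hn ▸ Int.natCast_nonneg n

lemma finite_Ici_symmDiff_forwardExponents (hσ : ∀ n : ℤ, n ≠ 0 → (σ ^ n) x ≠ x)
    (hfin : ({y | ∃ n : ℕ, (σ ^ n) x = y} ∆ {y | ∃ n : ℕ, (τ ^ n) x = y}).Finite) :
    (Ici 0 ∆ forwardExponents σ τ x).Finite := by
  rw [Ici_symmDiff_forwardExponents hσ]
  exact hfin.preimage (injective_zpow_apply hσ).injOn

lemma forwardExponents_step (hσ : ∀ n : ℤ, n ≠ 0 → (σ ^ n) x ≠ x)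
    (hτ : ∀ n : ℤ, n ≠ 0 → (τ ^ n) x ≠ x) {c : ℤ} (hc : (σ ^ c) x = τ x) :
    forwardExponents σ τ (τ x) = Equiv.addRight c ⁻¹' (forwardExponents σ τ x \ {0}) := by
  ext k
  simp only [forwardExponents, mem_preimage, coe_addRight, Set.mem_sdiff, mem_ofPred_eq,
    mem_singleton_iff]
  constructor
  · rintro ⟨m, hm⟩
    have hm' : (τ ^ (m + 1)) x = (σ ^ (k + c)) x := by
      rw [pow_succ, mul_apply, hm, zpow_add, mul_apply, hc]
    refine ⟨⟨m + 1, hm'⟩, fun hkc => hτ (m + 1 : ℕ) (by omega) ?_⟩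
    rw [zpow_natCast, hm', hkc, zpow_zero, one_apply]
  · rintro ⟨⟨_ | m, hm⟩, hkc⟩
    · exact absurd (injective_zpow_apply hσ (a₁ := 0) (by simpa using hm)).symm hkc
    · exact ⟨m, by rw [← mul_apply, ← pow_succ, hm, zpow_add, mul_apply, hc]⟩

lemma forwardIndex_step (hσ : ∀ n : ℤ, n ≠ 0 → (σ ^ n) x ≠ x)
    (hτ : ∀ n : ℤ, n ≠ 0 → (τ ^ n) x ≠ x) (hfin : (Ici 0 ∆ forwardExponents σ τ x).Finite)
    {c : ℤ} (hc : (σ ^ c) x = τ x) :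
    forwardIndex σ τ (τ x) = forwardIndex σ τ x + 1 - c := by
  set B := forwardExponents σ τ x
  have h0 : (0 : ℤ) ∈ B := ⟨0, by simp⟩
  have hB : (B ∆ (B \ {0})).Finite := by
    rw [symmDiff_of_ge sdiff_subset, sdiff_sdiff_cancel_left (singleton_subset_iff.2 h0)]
    exact finite_singleton 0
  have hB' : (Ici 0 ∆ (B \ {0})).Finite := (hfin.union hB).subset (symmDiff_triangle _ _ _)
  have hIci : Ici (-c) = Equiv.addRight c ⁻¹' Ici 0 := by ext; simp [neg_le_iff_add_nonneg]
  have hshift : (Ici (-c) ∆ (Equiv.addRight c ⁻¹' (B \ {0}))).Finite := by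
    rw [hIci, ← preimage_symmDiff]
    exact hB'.preimage (Equiv.addRight c).injective.injOn
  calc forwardIndex σ τ (τ x)
      = relIndex (Ici 0) (Ici (-c)) + relIndex (Ici (-c)) (Equiv.addRight c ⁻¹' (B \ {0})) := by
        rw [forwardIndex, forwardExponents_step hσ hτ hc,
          relIndex_add_relIndex (finite_Ici_symmDiff_Ici _ _) hshift]
    _ = -c + (relIndex (Ici 0) B + relIndex B (B \ {0})) := by
        rw [relIndex_Ici_Ici, hIci, relIndex_preimage_equiv, relIndex_add_relIndex hfin hB]
        ring
    _ = forwardIndex σ τ x + 1 - c := by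
        rw [relIndex_sdiff_singleton h0, forwardIndex]
        ring

lemma zpow_forwardIndex_step (hσ : ∀ n : ℤ, n ≠ 0 → (σ ^ n) x ≠ x)
    (horb : {y | ∃ n : ℤ, (σ ^ n) x = y} = {y | ∃ n : ℤ, (τ ^ n) x = y})
    (hfin : ({y | ∃ n : ℕ, (σ ^ n) x = y} ∆ {y | ∃ n : ℕ, (τ ^ n) x = y}).Finite) :
    (σ ^ forwardIndex σ τ (τ x)) (τ x) = σ ((σ ^ forwardIndex σ τ x) x) := by
  obtain ⟨c, hc⟩ : τ x ∈ {y | ∃ n : ℤ, (σ ^ n) x = y} := horb ▸ ⟨1, by simp⟩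
  rw [forwardIndex_step hσ (zpow_apply_ne_self_of_orbit_eq hσ horb)
      (finite_Ici_symmDiff_forwardExponents hσ hfin) hc, ← hc, ← mul_apply, ← zpow_add,
    ← mul_apply, ← zpow_one_add]
  congr 2
  ring

lemma semiconj_zpow_of_semiconj {G : Set X} (hG : ∀ x ∈ G, ∀ k : ℤ, (τ ^ k) x ∈ G) {S : X → X}
    (hS : ∀ x ∈ G, S (τ x) = σ (S x)) (x : X) (hx : x ∈ G) (k : ℤ) :
    S ((τ ^ k) x) = (σ ^ k) (S x) := by
  induction k using Int.induction_on with
  | zero => simp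
  | succ k ih =>
    rw [add_comm, zpow_one_add, mul_apply, hS _ (hG x hx k), ih, ← mul_apply, ← zpow_one_add]
  | pred k ih =>
    apply σ.injective
    rw [← hS _ (hG x hx _), ← mul_apply τ, ← zpow_one_add, ← mul_apply σ, ← zpow_one_add,
      show 1 + (-(k : ℤ) - 1) = -k by ring]
    exact ih

lemma image_zpow_apply_of_subset {n : X → ℤ} {A : Set X} {j : ℤ}
    (hA : A ⊆ n ⁻¹' {j}) : (fun x => (σ ^ n x) x) '' A = ⇑(σ ^ (-j)) ⁻¹' A := by
  rw [zpow_neg, inv_def, ← Equiv.image_eq_preimage_symm]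
  exact Set.image_congr fun x hx => by rw [hA hx]

lemma bijective_zpow_apply {G : Set X} (hσG : ∀ x ∈ G, ∀ k : ℤ, (σ ^ k) x ∈ G)
    (hτG : ∀ x ∈ G, ∀ k : ℤ, (τ ^ k) x ∈ G) (hσ : ∀ x ∈ G, ∀ n : ℤ, n ≠ 0 → (σ ^ n) x ≠ x)
    (horb : ∀ x ∈ G, {y | ∃ n : ℤ, (σ ^ n) x = y} ⊆ {y | ∃ n : ℤ, (τ ^ n) x = y})
    {n : X → ℤ} (hn : ∀ x ∉ G, n x = 0)
    (hconj : ∀ x ∈ G, (σ ^ n (τ x)) (τ x) = σ ((σ ^ n x) x)) :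
    Bijective fun x => (σ ^ n x) x := by
  set S := fun x => (σ ^ n x) x
  have hSGc : ∀ x ∉ G, S x = x := fun x hx => by simp [S, hn x hx]
  have hSG : ∀ x, S x ∈ G ↔ x ∈ G := fun x => by
    by_cases hx : x ∈ G
    · simp [S, hx, hσG x hx]
    · simp [hSGc x hx, hx]
  have hSτ := semiconj_zpow_of_semiconj hτG (S := S) hconj
  refine ⟨fun y z hyz => ?_, fun z => ?_⟩
  · by_cases hy : y ∈ G
    · obtain ⟨m, rfl⟩ : ∃ m : ℤ, (τ ^ m) y = z := horb y hy ⟨-n z + n y, by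
        rw [zpow_add, mul_apply]
        change (σ ^ (-n z)) (S y) = z
        rw [hyz, ← mul_apply, ← zpow_add, neg_add_cancel, zpow_zero, one_apply]⟩
      have hm : (σ ^ m) (S y) = S y := by rw [← hSτ y hy, hyz]
      by_cases h : m = 0
      · simp [h]
      · exact absurd hm (hσ _ ((hSG y).2 hy) m h)
    · have hz : z ∉ G := fun hz => hy ((hSG y).1 (hyz ▸ (hSG z).2 hz))
      rwa [hSGc y hy, hSGc z hz] at hyz
  · by_cases hz : z ∈ G
    · refine ⟨(τ ^ (-n z)) z, ?_⟩
      rw [hSτ z hz, ← mul_apply, ← zpow_add, neg_add_cancel, zpow_zero, one_apply]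
    · exact ⟨z, hSGc z hz⟩

end Equiv.Perm

section PiecewisePower

variable {X : Type*} [MeasurableSpace X] {μ : Measure X}

lemma MeasurableEquiv.measurable_toEquiv_zpow (T : X ≃ᵐ X) (k : ℤ) :
    Measurable ⇑(T.toEquiv ^ k) := by
  induction k using Int.induction_on with
  | zero => exact measurable_id
  | succ k ih => rw [zpow_add_one, Equiv.Perm.coe_mul]; exact ih.comp T.measurable
  | pred k ih => rw [zpow_sub_one, Equiv.Perm.coe_mul]; exact ih.comp T.symm.measurable

lemma MeasureTheory.MeasurePreserving.toEquiv_zpow {T : X ≃ᵐ X} (hT : MeasurePreserving T μ μ)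
    (k : ℤ) : MeasurePreserving ⇑(T.toEquiv ^ k) μ μ := by
  induction k using Int.induction_on with
  | zero => exact MeasurePreserving.id μ
  | succ k ih => rw [zpow_add_one, Equiv.Perm.coe_mul]; exact ih.comp hT
  | pred k ih => rw [zpow_sub_one, Equiv.Perm.coe_mul]; exact ih.comp (hT.symm T)

variable {T : X ≃ᵐ X} {n : X → ℤ}

lemma measurable_zpow_apply (hn : Measurable n) : Measurable fun x => (T.toEquiv ^ n x) x :=
  (measurable_from_prod_countable_left (f := fun p : X × ℤ => (T.toEquiv ^ p.2) p.1)
    fun j => T.measurable_toEquiv_zpow j).comp (measurable_id.prodMk hn)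

lemma measurableSet_image_zpow_apply (hn : Measurable n) {E : Set X} (hE : MeasurableSet E) :
    MeasurableSet ((fun x => (T.toEquiv ^ n x) x) '' E) := by
  have hE' : ⋃ j, E ∩ n ⁻¹' {j} = E := by ext; simp
  rw [← hE', image_iUnion]
  exact .iUnion fun j => by
    rw [Equiv.Perm.image_zpow_apply_of_subset inter_subset_right]
    exact T.measurable_toEquiv_zpow (-j) (hE.inter (hn (measurableSet_singleton j)))

lemma measure_image_zpow_apply (hT : MeasurePreserving T μ μ) (hn : Measurable n)
    (hinj : Injective fun x => (T.toEquiv ^ n x) x) {E : Set X} (hE : MeasurableSet E) :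
    μ ((fun x => (T.toEquiv ^ n x) x) '' E) = μ E := by
  set P : ℤ → Set X := fun j => E ∩ n ⁻¹' {j}
  have hPm : ∀ j, MeasurableSet (P j) := fun j => hE.inter (hn (measurableSet_singleton j))
  have hPd : Pairwise (onFun Disjoint P) := fun i j hij =>
    (disjoint_singleton.2 hij).preimage n |>.mono inter_subset_right inter_subset_right
  have hPE : ⋃ j, P j = E := by ext; simp [P]
  calc μ ((fun x => (T.toEquiv ^ n x) x) '' E)
      = ∑' j, μ ((fun x => (T.toEquiv ^ n x) x) '' P j) := by
        rw [← hPE, image_iUnion]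
        exact measure_iUnion (fun i j hij => disjoint_image_of_injective hinj (hPd hij))
          fun j => measurableSet_image_zpow_apply hn (hPm j)
    _ = ∑' j, μ (P j) := by
        congr 1
        funext j
        rw [Equiv.Perm.image_zpow_apply_of_subset inter_subset_right]
        exact (hT.toEquiv_zpow (-j)).measure_preimage (hPm j).nullMeasurableSet
    _ = μ E := by rw [← measure_iUnion hPd hPm, hPE]

lemma exists_measurePreserving_eq_zpow_apply (hT : MeasurePreserving T μ μ) (hn : Measurable n)
    (hbij : Bijective fun x => (T.toEquiv ^ n x) x) :
    ∃ S : X ≃ᵐ X, MeasurePreserving S μ μ ∧ ∀ x, S x = (T.toEquiv ^ n x) x := by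
  set e := Equiv.ofBijective _ hbij
  let S : X ≃ᵐ X :=
    { toEquiv := e
      measurable_toFun := measurable_zpow_apply hn
      measurable_invFun := fun E hE => by
        rw [← e.image_eq_preimage_symm]
        exact measurableSet_image_zpow_apply hn hE }
  have hSsymm : MeasurePreserving S.symm μ μ := by
    refine ⟨S.symm.measurable, Measure.ext fun E hE => ?_⟩
    rw [Measure.map_apply S.symm.measurable hE]
    change μ (e.symm ⁻¹' E) = μ E
    rw [← e.image_eq_preimage_symm]
    exact measure_image_zpow_apply hT hn hbij.1 hE
  exact ⟨S, by simpa using hSsymm.symm, fun x => rfl⟩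

end PiecewisePower

section InvariantSet

variable {X : Type*} [MeasurableSpace X] {μ : Measure X}

lemma exists_measurableSet_invariant_of_ae {ι : Type*} [Countable ι] {g : ι → Equiv.Perm X}
    (hg : ∀ i, MeasurePreserving (g i) μ μ) {p : X → Prop} (hp : ∀ᵐ x ∂μ, p x) :
    ∃ G : Set X, MeasurableSet G ∧ (∀ᵐ x ∂μ, x ∈ G) ∧ (∀ x ∈ G, p x) ∧
      ∀ i, ∀ x ∈ G, g i x ∈ G := by
  set G₀ := (toMeasurable μ {x | ¬p x})ᶜ
  have hG₀ : ∀ᵐ x ∂μ, x ∈ G₀ := by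
    rw [ae_iff]
    simpa [G₀, measure_toMeasurable] using ae_iff.1 hp
  have hword : ∀ l : List ι, MeasurePreserving ⇑(l.map g).prod μ μ := by
    intro l
    induction l with
    | nil => exact MeasurePreserving.id μ
    | cons i l ih => simpa using (hg i).comp ih
  refine ⟨⋂ l : List ι, ⇑(l.map g).prod ⁻¹' G₀,
    .iInter fun l : List ι => (hword l).measurable (measurableSet_toMeasurable _ _).compl,
    by simpa only [mem_iInter, mem_preimage] using
      ae_all_iff.2 fun l => (hword l).quasiMeasurePreserving.ae hG₀,
    fun x hx => ?_, fun i x hx => mem_iInter.2 fun l => ?_⟩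
  · by_contra h
    exact mem_iInter.1 hx [] (subset_toMeasurable _ _ h)
  · simpa using mem_iInter.1 hx (l ++ [i])

end InvariantSet

open Equiv.Perm

section IndexMeasurability

variable {X : Type*} [MeasurableSpace X]

lemma measurableSet_setOf_finite_symmDiff_and {ι : Type*} [Countable ι] {F : X → Set ι}
    (hF : ∀ i, MeasurableSet {x | i ∈ F x}) (A : Set ι) (p : Set ι → Prop) :
    MeasurableSet {x | (A ∆ F x).Finite ∧ p (F x)} := by
  have hFeq : ∀ s : Set ι, MeasurableSet {x | F x = s} := fun s => by
    simp only [Set.ext_iff, ofPred_forall]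
    exact .iInter fun i => (hF i).iff (.const _)
  have h : {x | (A ∆ F x).Finite ∧ p (F x)} = ⋃ D : Finset ι, {x | F x = A ∆ D ∧ p (A ∆ D)} := by
    ext x
    simp only [mem_ofPred_eq, mem_iUnion]
    constructor
    · rintro ⟨hfin, hp⟩
      refine ⟨hfin.toFinset, ?_⟩
      simpa [symmDiff_symmDiff_cancel_left] using hp
    · rintro ⟨D, hD, hp⟩
      simp [hD, symmDiff_symmDiff_cancel_left, hp]
  rw [h]
  exact .iUnion fun D => (hFeq _).inter (.const _)

variable [MeasurableEq X]

lemma measurableSet_setOf_mem_forwardExponents (T U : X ≃ᵐ X) (k : ℤ) :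
    MeasurableSet {x | k ∈ forwardExponents T.toEquiv U.toEquiv x} := by
  have h : {x | k ∈ forwardExponents T.toEquiv U.toEquiv x} =
      ⋃ m : ℕ, {x | (U.toEquiv ^ m) x = (T.toEquiv ^ k) x} := by
    ext
    simp [forwardExponents]
  rw [h]
  refine .iUnion fun m => measurableSet_eq_fun ?_ (T.measurable_toEquiv_zpow k)
  rw [Equiv.Perm.coe_pow]
  exact U.measurable.iterate m

lemma measurable_indicator_forwardIndex (T U : X ≃ᵐ X) {G : Set X} (hG : MeasurableSet G)
    (hfin : ∀ x ∈ G, (Ici 0 ∆ forwardExponents T.toEquiv U.toEquiv x).Finite) :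
    Measurable (G.indicator (forwardIndex T.toEquiv U.toEquiv)) := by
  refine measurable_to_countable' fun j => ?_
  have h : G.indicator (forwardIndex T.toEquiv U.toEquiv) ⁻¹' {j} =
      G ∩ {x | (Ici 0 ∆ forwardExponents T.toEquiv U.toEquiv x).Finite ∧
        relIndex (Ici 0) (forwardExponents T.toEquiv U.toEquiv x) = j} ∪
      Gᶜ ∩ {_x | 0 = j} := by
    ext x
    by_cases hx : x ∈ G <;> simp [hx, hfin, forwardIndex]
  rw [h]
  exact (hG.inter (measurableSet_setOf_finite_symmDiff_and
    (measurableSet_setOf_mem_forwardExponents T U) (Ici 0)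
      (fun s => relIndex (Ici 0) s = j))).union (hG.compl.inter (.const _))

end IndexMeasurability

theorem conjugate_of_finite_symmDiff_forward_orbits_general {X : Type*} [MeasurableSpace X]
    [StandardBorelSpace X] (μ : Measure X)
    (T : X ≃ᵐ X) (hT : MeasurePreserving (⇑T) μ μ) (hap : Aperiodic μ T)
    (U : X ≃ᵐ X) (hU : MeasurePreserving (⇑U) μ μ)
    (horb : SameOrbits μ T U)
    (hfin : ∀ᵐ x ∂μ,
      ({y | ∃ n : ℕ, (T.toEquiv ^ n) x = y} ∆ {y | ∃ n : ℕ, (U.toEquiv ^ n) x = y}).Finite) :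
    ∃ S : X ≃ᵐ X, MeasurePreserving (⇑S) μ μ ∧ ∀ᵐ x ∂μ, S (U x) = T (S x) := by
  obtain ⟨G, hGm, hGae, hgood, hGinv⟩ := exists_measurableSet_invariant_of_ae
    (g := Sum.elim (T.toEquiv ^ ·) (U.toEquiv ^ ·))
    (Sum.rec hT.toEquiv_zpow hU.toEquiv_zpow) (hap.and (horb.and hfin))
  set n := G.indicator (forwardIndex T.toEquiv U.toEquiv)
  have hconj : ∀ x ∈ G, (T.toEquiv ^ n (U x)) (U x) = T ((T.toEquiv ^ n x) x) := by
    intro x hx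
    have hUx : U x ∈ G := by simpa using hGinv (.inr 1) x hx
    simp only [n, indicator_of_mem hx, indicator_of_mem hUx]
    exact zpow_forwardIndex_step (hgood x hx).1 (hgood x hx).2.1 (hgood x hx).2.2
  have hbij : Bijective fun x => (T.toEquiv ^ n x) x :=
    bijective_zpow_apply (fun x hx k => hGinv (.inl k) x hx) (fun x hx k => hGinv (.inr k) x hx)
      (fun x hx => (hgood x hx).1) (fun x hx => (hgood x hx).2.1.subset)
      (fun x hx => indicator_of_notMem hx _) hconj
  have hn : Measurable n := measurable_indicator_forwardIndex T U hGm fun x hx =>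
    finite_Ici_symmDiff_forwardExponents (hgood x hx).1 (hgood x hx).2.2
  obtain ⟨S, hS, hSeq⟩ := exists_measurePreserving_eq_zpow_apply hT hn hbij
  exact ⟨S, hS, hGae.mono fun x hx => by rw [hSeq, hSeq, hconj x hx]⟩

/-- **Katznelson's theorem**: if `T` is aperiodic, `U` has the same orbits as `T`, and
for a.e. `x` the symmetric difference of the forward `T`-orbit and the forward `U`-orbit
of `x` is finite, then `T` and `U` are conjugate: there is a measure-preserving `S` with
`S U S⁻¹ = T` up to null sets. -/
theorem conjugate_of_finite_symmDiff_forward_orbits {X : Type*} [MeasurableSpace X]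
    [StandardBorelSpace X] (μ : Measure X) [IsProbabilityMeasure μ] [NullSingletonClass μ]
    (T : X ≃ᵐ X) (hT : MeasurePreserving (⇑T) μ μ) (hap : Aperiodic μ T)
    (U : X ≃ᵐ X) (hU : MeasurePreserving (⇑U) μ μ)
    (horb : SameOrbits μ T U)
    (hfin : ∀ᵐ x ∂μ,
      ({y | ∃ n : ℕ, (T.toEquiv ^ n) x = y} ∆ {y | ∃ n : ℕ, (U.toEquiv ^ n) x = y}).Finite) :
    ∃ S : X ≃ᵐ X, MeasurePreserving (⇑S) μ μ ∧ ∀ᵐ x ∂μ, S (U x) = T (S x) :=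
  conjugate_of_finite_symmDiff_forward_orbits_general μ T hT hap U hU horb hfin
end
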